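/- arXiv:1107.4726 — 3 statements merged into one kernel-verified Lean document; each statement's English description precedes it below -/
import Mathlib

section
/- Let (E,‖·‖) be an RN module over ℝ with base (Ω,𝓕,P), G ⊆ E a subset with the countable concatenation property, and f : E → L̄⁰(𝓕) a function with the local property. If the restriction of f to G is proper and bounded from below on G (resp. bounded from above on G), then for each ε ∈ L⁰₊₊(𝓕) there exists x_ε ∈ G such that f(x_ε) ≤ ⋀f(G) + ε (resp. f(x_ε) ≥ ⋁f(G) − ε). -/
open MeasureTheory ENNReal Set Filter

namespace GYY

variable {Ω : Type*} [MeasurableSpace Ω]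

/-- `L⁰(𝓕)`: equivalence classes of real-valued random variables on `(Ω,𝓕,P)`. -/
abbrev L0 (P : Measure Ω) := Ω →ₘ[P] ℝ

/-- `L̄⁰(𝓕)`: equivalence classes of extended-real-valued random variables. -/
abbrev L0e (P : Measure Ω) := Ω →ₘ[P] EReal

/-- `L⁰₊₊(𝓕)`: the (classes of) random variables that are strictly positive a.s. -/
def L0pp (P : Measure Ω) : Set (L0 P) := {ε | ∀ᵐ ω ∂P, 0 < ε ω}

/-- The equivalence class `Ĩ_A` of the indicator function of a measurable set `A`. -/
noncomputable def indL0 (P : Measure Ω) (A : Set Ω) (hA : MeasurableSet A) : L0 P :=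
  AEEqFun.mk (A.indicator fun _ => (1 : ℝ)) (aestronglyMeasurable_const.indicator hA)

/-- A random metric space (RM space) with base `(Ω,𝓕,P)`. -/
structure RMSpace (P : Measure Ω) (E : Type*) where
  d : E → E → L0 P
  d_nonneg : ∀ p q, ∀ᵐ ω ∂P, 0 ≤ d p q ω
  d_eq_zero_iff : ∀ p q, d p q = 0 ↔ p = q
  d_symm : ∀ p q, d p q = d q p
  d_triangle : ∀ p q r, ∀ᵐ ω ∂P, d p r ω ≤ d p q ω + d q r ω

/-- Convergence in probability `P` of a sequence in `L⁰(𝓕)`, i.e. convergence in the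
`(ε,λ)`-topology of `L⁰(𝓕)` with the random metric `d(p,q) = |p - q|`. -/
def TendstoProb (P : Measure Ω) (r : ℕ → L0 P) (s : L0 P) : Prop :=
  ∀ ε : ℝ, 0 < ε → ∀ lam ∈ Ioo (0 : ℝ) 1, ∃ N : ℕ, ∀ n ≥ N,
    ENNReal.ofReal (1 - lam) < P {ω | |r n ω - s ω| < ε}

namespace RMSpace

variable {P : Measure Ω} {E : Type*} (M : RMSpace P E)

/-- Convergence of a sequence in the `(ε,λ)`-topology of an RM space. -/
def TendstoEL (x : ℕ → E) (a : E) : Prop :=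
  ∀ ε : ℝ, 0 < ε → ∀ lam ∈ Ioo (0 : ℝ) 1, ∃ N : ℕ, ∀ n ≥ N,
    ENNReal.ofReal (1 - lam) < P {ω | M.d (x n) a ω < ε}

/-- Cauchy sequence for the `d_{ε,λ}`-uniformity of an RM space. -/
def CauchySeqEL (x : ℕ → E) : Prop :=
  ∀ ε : ℝ, 0 < ε → ∀ lam ∈ Ioo (0 : ℝ) 1, ∃ N : ℕ, ∀ m ≥ N, ∀ n ≥ N,
    ENNReal.ofReal (1 - lam) < P {ω | M.d (x m) (x n) ω < ε}

/-- `d_{ε,λ}`-completeness of an RM space (the `d_{ε,λ}`-uniformity is metrizable, hence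
completeness is equivalent to sequential completeness). -/
def CompleteEL : Prop := ∀ x : ℕ → E, M.CauchySeqEL x → ∃ a, M.TendstoEL x a

/-- `φ : E → L̄⁰(𝓕)` is `𝒯_{ε,λ}`-lower semicontinuous: its epigraph
`epi(φ) = {(x,r) ∈ E × L⁰ : φ(x) ≤ r}` is closed in
`(E,𝒯_{ε,λ}) × (L⁰(𝓕),𝒯_{ε,λ})` (sequentially; both topologies are metrizable). -/
def LscEL (φ : E → L0e P) : Prop :=
  ∀ (x : ℕ → E) (r : ℕ → L0 P) (a : E) (s : L0 P),
    (∀ n, ∀ᵐ ω ∂P, φ (x n) ω ≤ (r n ω : EReal)) →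
    M.TendstoEL x a → TendstoProb P r s →
    ∀ᵐ ω ∂P, φ a ω ≤ (s ω : EReal)

end RMSpace

/-- `φ` is proper on `G`: `φ(x) > -∞` a.s. for every `x ∈ G`, and `φ(x) < +∞` a.s.
for some `x ∈ G`. -/
def ProperOn {E : Type*} {P : Measure Ω} (φ : E → L0e P) (G : Set E) : Prop :=
  (∀ x ∈ G, ∀ᵐ ω ∂P, ⊥ < φ x ω) ∧ ∃ x ∈ G, ∀ᵐ ω ∂P, φ x ω < ⊤

/-- `φ` is bounded from below on `G` by an element of `L⁰(𝓕)`. -/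
def BddBelowOn {E : Type*} {P : Measure Ω} (φ : E → L0e P) (G : Set E) : Prop :=
  ∃ ξ : L0 P, ∀ x ∈ G, ∀ᵐ ω ∂P, (ξ ω : EReal) ≤ φ x ω

/-- `φ` is bounded from above on `G` by an element of `L⁰(𝓕)`. -/
def BddAboveOn {E : Type*} {P : Measure Ω} (φ : E → L0e P) (G : Set E) : Prop :=
  ∃ ξ : L0 P, ∀ x ∈ G, ∀ᵐ ω ∂P, φ x ω ≤ (ξ ω : EReal)

/-- `η = ⋀ φ(G)`, the infimum of `φ(G)` in the complete lattice `L̄⁰(𝓕)`. -/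
def IsInfOn {E : Type*} {P : Measure Ω} (φ : E → L0e P) (G : Set E) (η : L0e P) : Prop :=
  (∀ x ∈ G, ∀ᵐ ω ∂P, η ω ≤ φ x ω) ∧
    ∀ ζ : L0e P, (∀ x ∈ G, ∀ᵐ ω ∂P, ζ ω ≤ φ x ω) → ∀ᵐ ω ∂P, ζ ω ≤ η ω

/-- `η = ⋁ φ(G)`, the supremum of `φ(G)` in the complete lattice `L̄⁰(𝓕)`. -/
def IsSupOn {E : Type*} {P : Measure Ω} (φ : E → L0e P) (G : Set E) (η : L0e P) : Prop :=
  (∀ x ∈ G, ∀ᵐ ω ∂P, φ x ω ≤ η ω) ∧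
    ∀ ζ : L0e P, (∀ x ∈ G, ∀ᵐ ω ∂P, φ x ω ≤ ζ ω) → ∀ᵐ ω ∂P, η ω ≤ ζ ω

/-- `s = ⋁ g(G)` for an `L⁰(𝓕)`-valued function `g`. -/
def IsSupOnR {E : Type*} {P : Measure Ω} (g : E → L0 P) (G : Set E) (s : L0 P) : Prop :=
  (∀ x ∈ G, ∀ᵐ ω ∂P, g x ω ≤ s ω) ∧
    ∀ c : L0 P, (∀ x ∈ G, ∀ᵐ ω ∂P, g x ω ≤ c ω) → ∀ᵐ ω ∂P, s ω ≤ c ω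

/-- The Cauchy property (for the `d_{ε,λ}`-uniformity of `L⁰(𝓕)`, i.e. the uniformity of
convergence in probability) of the net `{φ(m) : m ∈ M}` indexed by `M` directed by the
order of `X`. -/
def CauchyNetProb {X : Type*} [Preorder X] {P : Measure Ω} (φ : X → L0e P) (M : Set X) : Prop :=
  ∀ ε : ℝ, 0 < ε → ∀ lam ∈ Ioo (0 : ℝ) 1, ∃ m₀ ∈ M, ∀ m₁ ∈ M, ∀ m₂ ∈ M,
    m₀ ≤ m₁ → m₀ ≤ m₂ →
      ENNReal.ofReal (1 - lam) < P {ω | |(φ m₁ ω).toReal - (φ m₂ ω).toReal| < ε}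

/-- The section filter of the net `{x_g : g ∈ G}`, `x_g = g`, indexed by `G` directed by the
order of `X`; the net is Cauchy iff this filter is a Cauchy filter. -/
def netFilter {X : Type*} [Preorder X] (G : Set X) : Filter X :=
  ⨅ g ∈ G, 𝓟 {y | y ∈ G ∧ g ≤ y}

/-- A random normed module (RN module) over `ℝ` with base `(Ω,𝓕,P)`: a left module `E`
over the algebra `L⁰(𝓕)` together with an `L⁰`-norm. -/
structure RNModule (P : Measure Ω) (E : Type*) [AddCommGroup E] where
  smul : L0 P → E → E
  one_smul : ∀ x, smul 1 x = x
  mul_smul : ∀ ξ η x, smul (ξ * η) x = smul ξ (smul η x)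
  smul_add : ∀ ξ x y, smul ξ (x + y) = smul ξ x + smul ξ y
  add_smul : ∀ ξ η x, smul (ξ + η) x = smul ξ x + smul η x
  nm : E → L0 P
  nm_nonneg : ∀ x, ∀ᵐ ω ∂P, 0 ≤ nm x ω
  nm_eq_zero_iff : ∀ x, nm x = 0 ↔ x = 0
  nm_smul : ∀ ξ x, ∀ᵐ ω ∂P, nm (smul ξ x) ω = |ξ ω| * nm x ω
  nm_add_le : ∀ x y, ∀ᵐ ω ∂P, nm (x + y) ω ≤ nm x ω + nm y ω

/-- The `𝒯_c`-neighbourhood filter of a point `r` of `L⁰(𝓕)`, with base the closed balls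
`{s : |s - r| ≤ ε}`, `ε ∈ L⁰₊₊`. -/
def cNhdsL0 (P : Measure Ω) (r : L0 P) : Filter (L0 P) :=
  ⨅ ε ∈ L0pp P, 𝓟 {s | ∀ᵐ ω ∂P, |s ω - r ω| ≤ ε ω}

namespace RNModule

variable {P : Measure Ω} {E : Type*} [AddCommGroup E] (N : RNModule P E)

/-- Convergence of sequences in the `(ε,λ)`-topology `𝒯_{ε,λ}` of an RN module. -/
def TendstoEL (x : ℕ → E) (a : E) : Prop :=
  ∀ ε : ℝ, 0 < ε → ∀ lam ∈ Ioo (0 : ℝ) 1, ∃ N' : ℕ, ∀ n ≥ N',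
    ENNReal.ofReal (1 - lam) < P {ω | N.nm (x n - a) ω < ε}

/-- Cauchy sequence for the `d_{ε,λ}`-uniformity of an RN module. -/
def CauchySeqEL (x : ℕ → E) : Prop :=
  ∀ ε : ℝ, 0 < ε → ∀ lam ∈ Ioo (0 : ℝ) 1, ∃ N' : ℕ, ∀ m ≥ N', ∀ n ≥ N',
    ENNReal.ofReal (1 - lam) < P {ω | N.nm (x m - x n) ω < ε}

/-- `𝒯_{ε,λ}`-completeness (the `d_{ε,λ}`-uniformity is metrizable, hence completeness is
equivalent to sequential completeness). -/
def CompleteEL : Prop := ∀ x : ℕ → E, N.CauchySeqEL x → ∃ a, N.TendstoEL x a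

/-- `G` is `𝒯_{ε,λ}`-closed (sequentially; `𝒯_{ε,λ}` is metrizable). -/
def ClosedEL (G : Set E) : Prop :=
  ∀ (x : ℕ → E) (a : E), (∀ n, x n ∈ G) → N.TendstoEL x a → a ∈ G

/-- `φ : G → L̄⁰(𝓕)` is `𝒯_{ε,λ}`-lower semicontinuous on `G`: its epigraph
`{(x,r) ∈ G × L⁰ : φ(x) ≤ r}` is closed in `(G,𝒯_{ε,λ}) × (L⁰(𝓕),𝒯_{ε,λ})`. -/
def LscELOn (φ : E → L0e P) (G : Set E) : Prop :=
  ∀ (x : ℕ → E) (r : ℕ → L0 P) (a : E) (s : L0 P),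
    (∀ n, x n ∈ G) → a ∈ G →
    (∀ n, ∀ᵐ ω ∂P, φ (x n) ω ≤ (r n ω : EReal)) →
    N.TendstoEL x a → TendstoProb P r s →
    ∀ᵐ ω ∂P, φ a ω ≤ (s ω : EReal)

/-- The neighbourhood filter of `x` in the locally `L⁰`-convex topology `𝒯_c`,
whose base consists of the closed balls `{y : ‖y - x‖ ≤ ε}`, `ε ∈ L⁰₊₊`. -/
def cNhds (x : E) : Filter E :=
  ⨅ ε ∈ L0pp P, 𝓟 {y | ∀ᵐ ω ∂P, N.nm (y - x) ω ≤ ε ω}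

/-- The `d_c`-uniformity of an RN module, with base `{U(ε) : ε ∈ L⁰₊₊}`,
`U(ε) = {(p,q) : ‖p - q‖ ≤ ε}`. -/
def cUniformity : Filter (E × E) :=
  ⨅ ε ∈ L0pp P, 𝓟 {p | ∀ᵐ ω ∂P, N.nm (p.1 - p.2) ω ≤ ε ω}

/-- `𝒯_c`-completeness: every Cauchy filter for the `d_c`-uniformity converges. -/
def cComplete : Prop :=
  ∀ F : Filter E, F.NeBot → F ×ˢ F ≤ N.cUniformity → ∃ x, F ≤ N.cNhds x

/-- The `𝒯_c`-closure of a subset. -/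
def cClosure (G : Set E) : Set E := {x | (N.cNhds x ⊓ 𝓟 G).NeBot}

/-- `G` is `𝒯_c`-closed. -/
def cClosed (G : Set E) : Prop := ∀ x, x ∈ N.cClosure G → x ∈ G

/-- `S` is `𝒯_c`-dense in `T`. -/
def cDenseIn (S T : Set E) : Prop := ∀ x ∈ T, x ∈ N.cClosure S

/-- The `𝒯_c`-boundary `∂_c G`. -/
def cBoundary (G : Set E) : Set E := N.cClosure G ∩ N.cClosure Gᶜ

/-- `φ : G → L̄⁰(𝓕)` is `𝒯_c`-lower semicontinuous on `G`: its epigraph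
`{(x,r) ∈ G × L⁰ : φ(x) ≤ r}` is closed in `(G,𝒯_c) × (L⁰(𝓕),𝒯_c)`. -/
def cLscOn (φ : E → L0e P) (G : Set E) : Prop :=
  ∀ (a : E) (s : L0 P), a ∈ G →
    ((N.cNhds a ×ˢ cNhdsL0 P s) ⊓
      𝓟 {p : E × L0 P | p.1 ∈ G ∧ ∀ᵐ ω ∂P, φ p.1 ω ≤ (p.2 ω : EReal)}).NeBot →
    ∀ᵐ ω ∂P, φ a ω ≤ (s ω : EReal)

/-- The countable concatenation property of a subset `G` of an RN module. -/
def HasCC (G : Set E) : Prop :=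
  ∀ (x : ℕ → E), (∀ n, x n ∈ G) →
    ∀ (A : ℕ → Set Ω) (hA : ∀ n, MeasurableSet (A n)),
      (∀ i j, i ≠ j → Disjoint (A i) (A j)) → (⋃ n, A n) = univ →
        ∃ y ∈ G, ∀ n, N.smul (indL0 P (A n) (hA n)) y = N.smul (indL0 P (A n) (hA n)) (x n)

/-- The countable concatenation property of a subset of the product `L⁰(𝓕)`-module
`E × L⁰(𝓕)` (with componentwise module operations). -/
def HasCCProd (G : Set (E × L0 P)) : Prop :=
  ∀ (p : ℕ → E × L0 P), (∀ n, p n ∈ G) →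
    ∀ (A : ℕ → Set Ω) (hA : ∀ n, MeasurableSet (A n)),
      (∀ i j, i ≠ j → Disjoint (A i) (A j)) → (⋃ n, A n) = univ →
        ∃ q ∈ G, ∀ n,
          N.smul (indL0 P (A n) (hA n)) q.1 = N.smul (indL0 P (A n) (hA n)) (p n).1 ∧
          indL0 P (A n) (hA n) * q.2 = indL0 P (A n) (hA n) * (p n).2

/-- The local property of an `L̄⁰(𝓕)`-valued function:
`Ĩ_A·φ(x) = Ĩ_A·φ(Ĩ_A·x)` for all `x ∈ E`, `A ∈ 𝓕`, i.e. `φ(x) = φ(Ĩ_A x)` a.s. on `A`. -/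
def LocalProp (φ : E → L0e P) : Prop :=
  ∀ (x : E) (A : Set Ω) (hA : MeasurableSet A),
    ∀ᵐ ω ∂P, ω ∈ A → φ x ω = φ (N.smul (indL0 P A hA) x) ω

/-- `G` is `L⁰(𝓕)`-convex. -/
def L0Convex (G : Set E) : Prop :=
  ∀ x ∈ G, ∀ y ∈ G, ∀ ξ η : L0 P,
    (∀ᵐ ω ∂P, 0 ≤ ξ ω) → (∀ᵐ ω ∂P, 0 ≤ η ω) → ξ + η = 1 →
      N.smul ξ x + N.smul η y ∈ G

/-- `G` is a.s. bounded: `⋁{‖p‖ : p ∈ G} ∈ L⁰₊(𝓕)`. -/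
def ASBounded (G : Set E) : Prop :=
  ∃ ξ : L0 P, ∀ p ∈ G, ∀ᵐ ω ∂P, N.nm p ω ≤ ξ ω

/-- Membership in the random conjugate space `E*`: `f` is an a.s. bounded random linear
functional, i.e. an `L⁰(𝓕)`-linear map `f : E → L⁰(𝓕)` with `|f(x)| ≤ ξ·‖x‖` for all `x`
for some `ξ ∈ L⁰₊(𝓕)`. -/
def IsDual (f : E → L0 P) : Prop :=
  (∀ x y, f (x + y) = f x + f y) ∧
  (∀ (ξ : L0 P) (x : E), f (N.smul ξ x) = ξ * f x) ∧
  ∃ ξ : L0 P, (∀ᵐ ω ∂P, 0 ≤ ξ ω) ∧ ∀ x, ∀ᵐ ω ∂P, |f x ω| ≤ ξ ω * N.nm x ω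

/-- `nf = ‖f‖* := ⋀{ξ ∈ L⁰₊ : |f(x)| ≤ ξ‖x‖ for all x ∈ E}`, the random norm of `E*`. -/
def IsDualNorm (f : E → L0 P) (nf : L0 P) : Prop :=
  (∀ ξ : L0 P, ((∀ᵐ ω ∂P, 0 ≤ ξ ω) ∧ ∀ x, ∀ᵐ ω ∂P, |f x ω| ≤ ξ ω * N.nm x ω) →
    ∀ᵐ ω ∂P, nf ω ≤ ξ ω) ∧
  (∀ c : L0 P,
    (∀ ξ : L0 P, ((∀ᵐ ω ∂P, 0 ≤ ξ ω) ∧ ∀ x, ∀ᵐ ω ∂P, |f x ω| ≤ ξ ω * N.nm x ω) →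
      ∀ᵐ ω ∂P, c ω ≤ ξ ω) → ∀ᵐ ω ∂P, c ω ≤ nf ω)

/-- The cone `K(f,k) = {y ∈ E : k‖y‖ ≤ f(y)}`. -/
def Kcone (f : E → L0 P) (k : L0 P) : Set E := {y | ∀ᵐ ω ∂P, k ω * N.nm y ω ≤ f y ω}

/-- `f ∈ E*∖{0}`, bounded from above on `G`, supports `G` at some point:
`f(x) = ⋁f(G)` for some `x ∈ G`. -/
def Supports (G : Set E) (f : E → L0 P) : Prop :=
  N.IsDual f ∧ f ≠ 0 ∧ (∃ ξ : L0 P, ∀ x ∈ G, ∀ᵐ ω ∂P, f x ω ≤ ξ ω) ∧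
    ∃ x ∈ G, IsSupOnR f G (f x)

/-- The set of support points of `G`: points `x ∈ G` at which some
`f ∈ E*∖{0}`, bounded from above on `G`, attains `f(x) = ⋁f(G)`. -/
def SupportPoints (G : Set E) : Set E :=
  {x | x ∈ G ∧ ∃ f : E → L0 P, N.IsDual f ∧ f ≠ 0 ∧
    (∃ ξ : L0 P, ∀ y ∈ G, ∀ᵐ ω ∂P, f y ω ≤ ξ ω) ∧ IsSupOnR f G (f x)}

end RNModule

/-! The infimum `⋀ f(G)` in `L̄⁰` is already the pointwise infimum of countably many `f(yₙ)`,
`yₙ ∈ G` (take a sequence minimizing `𝔼[arctan (⋀ₙ f(yₙ))]`). As `⋀ f(G) > -∞`, almost every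
`ω` then lies in one of the sets `Bₙ = {f(yₙ) ≤ ⋀ f(G) + ε}`. Concatenating the `yₙ` along a
partition refining `(Bₙ)` gives `x_ε ∈ G`, and the local property identifies `f(x_ε)` with
`f(yₙ)` on the `n`-th piece. The supremum is handled dually. -/

section

open Real

/-- A bounded, strictly increasing real function on `EReal`: it lets infima of `EReal`-valued
random variables be compared through expectations. -/
noncomputable def _root_.EReal.arctan (t : EReal) : ℝ :=
  if t = ⊥ then -(π / 2) else if t = ⊤ then π / 2 else Real.arctan t.toReal

@[simp] lemma _root_.EReal.arctan_coe (x : ℝ) : EReal.arctan x = Real.arctan x := by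
  simp [EReal.arctan]

@[simp] lemma _root_.EReal.arctan_bot : EReal.arctan ⊥ = -(π / 2) := by simp [EReal.arctan]

@[simp] lemma _root_.EReal.arctan_top : EReal.arctan ⊤ = π / 2 := by simp [EReal.arctan]

lemma _root_.EReal.abs_arctan_le (t : EReal) : |EReal.arctan t| ≤ π / 2 := by
  rw [abs_le]
  induction t using EReal.rec with
  | bot => simp only [EReal.arctan_bot]; constructor <;> linarith [pi_pos]
  | coe x => simpa using ⟨(neg_pi_div_two_lt_arctan x).le, (arctan_lt_pi_div_two x).le⟩
  | top => simp only [EReal.arctan_top]; constructor <;> linarith [pi_pos]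

lemma _root_.EReal.arctan_strictMono : StrictMono EReal.arctan := by
  intro a b hab
  induction a using EReal.rec with
  | bot =>
    induction b using EReal.rec with
    | bot => exact absurd hab (lt_irrefl _)
    | coe y => simpa using neg_pi_div_two_lt_arctan y
    | top => simpa using pi_pos
  | coe x =>
    induction b using EReal.rec with
    | bot => exact absurd hab not_lt_bot
    | coe y => simpa using Real.arctan_strictMono (EReal.coe_lt_coe_iff.mp hab)
    | top => simpa using arctan_lt_pi_div_two x
  | top => exact absurd hab not_top_lt

lemma _root_.EReal.measurable_arctan : Measurable EReal.arctan :=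
  EReal.arctan_strictMono.monotone.measurable

lemma _root_.EReal.exists_le_add_of_iInf_le {ι : Sort*} [Nonempty ι] {a : ι → EReal}
    {b : EReal} {r : ℝ} (hr : 0 < r) (hb : b ≠ ⊥) (h : ⨅ i, a i ≤ b) : ∃ i, a i ≤ b + r := by
  induction b using EReal.rec with
  | bot => exact absurd rfl hb
  | coe t =>
    have hlt : (t : EReal) < t + r := by exact_mod_cast lt_add_of_pos_right t hr
    obtain ⟨i, hi⟩ := iInf_lt_iff.1 (h.trans_lt hlt)
    exact ⟨i, hi.le⟩
  | top => exact ⟨Classical.arbitrary ι, by simp⟩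

lemma _root_.EReal.exists_sub_le_of_le_iSup {ι : Sort*} [Nonempty ι] {a : ι → EReal}
    {b : EReal} {r : ℝ} (hr : 0 < r) (hb : b ≠ ⊤) (h : b ≤ ⨆ i, a i) : ∃ i, b - r ≤ a i := by
  induction b using EReal.rec with
  | bot => exact ⟨Classical.arbitrary ι, by simp⟩
  | coe t =>
    have hlt : (t : EReal) - r < t := by exact_mod_cast sub_lt_self t hr
    obtain ⟨i, hi⟩ := lt_iSup_iff.1 (hlt.trans_le h)
    exact ⟨i, hi.le⟩
  | top => exact absurd rfl hb

end

section

variable {ι : Type*} {μ : Measure Ω} [IsFiniteMeasure μ]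
  {s : Set ι} {g : ι → Ω → EReal}

theorem _root_.MeasureTheory.exists_seq_forall_ae_iInf_le (hs : s.Nonempty)
    (hg : ∀ i ∈ s, AEMeasurable (g i) μ) :
    ∃ y : ℕ → ι, (∀ n, y n ∈ s) ∧ ∀ i ∈ s, ∀ᵐ ω ∂μ, ⨅ n, g (y n) ω ≤ g i ω := by
  -- Minimize `J y = 𝔼[arctan (⨅ₙ g (y n))]` over sequences in `s`; a minimizing sequence of
  -- sequences merges into one minimizer, which adding any further `g i` cannot improve.
  set J : (ℕ → ι) → ℝ := fun y => ∫ ω, EReal.arctan (⨅ n, g (y n) ω) ∂μ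
  have hint : ∀ y : ℕ → ι, (∀ n, y n ∈ s) →
      Integrable (fun ω => EReal.arctan (⨅ n, g (y n) ω)) μ := fun y hy =>
    .of_bound (EReal.measurable_arctan.comp_aemeasurable
        (AEMeasurable.iInf fun n => hg _ (hy n))).aestronglyMeasurable
      (Real.pi / 2) (.of_forall fun ω => EReal.abs_arctan_le _)
  have hJ_mono : ∀ y z : ℕ → ι, (∀ n, y n ∈ s) → (∀ n, z n ∈ s) →
      (∀ ω, ⨅ n, g (y n) ω ≤ ⨅ n, g (z n) ω) → J y ≤ J z := fun y z hy hz h =>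
    integral_mono (hint y hy) (hint z hz) fun ω => EReal.arctan_strictMono.monotone (h ω)
  set S := J '' {y | ∀ n, y n ∈ s}
  have hS_bdd : BddBelow S := by
    refine ⟨-(Real.pi / 2 * μ.real univ), ?_⟩
    rintro _ ⟨y, -, rfl⟩
    exact neg_le_of_abs_le (norm_integral_le_of_norm_le_const
      (.of_forall fun ω => (Real.norm_eq_abs _).trans_le (EReal.abs_arctan_le _)))
  have hS_ne : S.Nonempty := ⟨_, fun _ => hs.some, fun _ => hs.some_mem, rfl⟩
  obtain ⟨u, -, hu, huS⟩ := exists_seq_tendsto_sInf hS_ne hS_bdd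
  choose Y hY hJY using huS
  set y : ℕ → ι := fun n => Y n.unpair.1 n.unpair.2
  have hy : ∀ n, y n ∈ s := fun n => hY _ _
  have hJy : J y ≤ sInf S := by
    refine ge_of_tendsto' hu fun k => (hJ_mono y (Y k) hy (hY k) fun ω => ?_).trans_eq (hJY k)
    exact le_iInf fun m => by simpa [y] using iInf_le (fun n => g (y n) ω) (Nat.pair k m)
  refine ⟨y, hy, fun i hi => ?_⟩
  set z : ℕ → ι := fun n => Nat.casesOn n i y
  have hz : ∀ n, z n ∈ s := by rintro (_ | n); exacts [hi, hy n]
  have hzy : ∀ ω, ⨅ n, g (z n) ω ≤ ⨅ n, g (y n) ω := fun ω =>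
    le_iInf fun n => iInf_le (fun n => g (z n) ω) (n + 1)
  have hJ : J z = J y :=
    le_antisymm (hJ_mono z y hz hy hzy) (hJy.trans (csInf_le hS_bdd ⟨z, hz, rfl⟩))
  have hae := (integral_eq_iff_of_ae_le (hint z hz) (hint y hy)
    (.of_forall fun ω => EReal.arctan_strictMono.monotone (hzy ω))).1 hJ
  filter_upwards [hae] with ω hω
  calc ⨅ n, g (y n) ω = ⨅ n, g (z n) ω := (EReal.arctan_strictMono.injective hω).symm
    _ ≤ g i ω := iInf_le (fun n => g (z n) ω) 0

theorem _root_.MeasureTheory.exists_seq_forall_ae_le_iSup (hs : s.Nonempty)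
    (hg : ∀ i ∈ s, AEMeasurable (g i) μ) :
    ∃ y : ℕ → ι, (∀ n, y n ∈ s) ∧ ∀ i ∈ s, ∀ᵐ ω ∂μ, g i ω ≤ ⨆ n, g (y n) ω := by
  obtain ⟨y, hy, hle⟩ :=
    exists_seq_forall_ae_iInf_le (g := fun i ω => -g i ω) hs fun i hi => (hg i hi).neg
  refine ⟨y, hy, fun i hi => ?_⟩
  filter_upwards [hle i hi] with ω hω
  rw [← EReal.neg_le_neg_iff]
  exact (le_iInf fun n => EReal.neg_le_neg_iff.2 (le_iSup (fun n => g (y n) ω) n)).trans hω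

end

section

variable {P : Measure Ω} {E : Type*} {f : E → L0e P} {G : Set E} {η : L0e P}

theorem IsInfOn.exists_seq_ae_iInf_le [IsFiniteMeasure P] (hη : IsInfOn f G η)
    (hG : G.Nonempty) :
    ∃ y : ℕ → E, (∀ n, y n ∈ G) ∧ ∀ᵐ ω ∂P, ⨅ n, f (y n) ω ≤ η ω := by
  obtain ⟨y, hyG, hy⟩ := exists_seq_forall_ae_iInf_le hG fun x _ => (f x).aemeasurable
  have hmeas : AEMeasurable (fun ω => ⨅ n, f (y n) ω) P := .iInf fun n => (f (y n)).aemeasurable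
  have hcoe := AEEqFun.coeFn_mk _ hmeas.aestronglyMeasurable
  have hlower : ∀ x ∈ G, ∀ᵐ ω ∂P, AEEqFun.mk _ hmeas.aestronglyMeasurable ω ≤ f x ω :=
    fun x hx => by filter_upwards [hcoe, hy x hx] with ω h₁ h₂; rwa [h₁]
  refine ⟨y, hyG, ?_⟩
  filter_upwards [hη.2 _ hlower, hcoe] with ω h₁ h₂
  rwa [h₂] at h₁

theorem IsSupOn.exists_seq_ae_le_iSup [IsFiniteMeasure P] (hη : IsSupOn f G η)
    (hG : G.Nonempty) :
    ∃ y : ℕ → E, (∀ n, y n ∈ G) ∧ ∀ᵐ ω ∂P, η ω ≤ ⨆ n, f (y n) ω := by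
  obtain ⟨y, hyG, hy⟩ := exists_seq_forall_ae_le_iSup hG fun x _ => (f x).aemeasurable
  have hmeas : AEMeasurable (fun ω => ⨆ n, f (y n) ω) P := .iSup fun n => (f (y n)).aemeasurable
  have hcoe := AEEqFun.coeFn_mk _ hmeas.aestronglyMeasurable
  have hupper : ∀ x ∈ G, ∀ᵐ ω ∂P, f x ω ≤ AEEqFun.mk _ hmeas.aestronglyMeasurable ω :=
    fun x hx => by filter_upwards [hcoe, hy x hx] with ω h₁ h₂; rwa [h₁]
  refine ⟨y, hyG, ?_⟩
  filter_upwards [hη.2 _ hupper, hcoe] with ω h₁ h₂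
  rwa [h₂] at h₁

namespace RNModule

open Function

variable [AddCommGroup E] {N : RNModule P E}

theorem HasCC.exists_mem_ae_eq_of_partition (hCC : N.HasCC G) (hloc : N.LocalProp f)
    {y : ℕ → E} (hy : ∀ n, y n ∈ G) {A : ℕ → Set Ω} (hA : ∀ n, MeasurableSet (A n))
    (hdisj : Pairwise (Disjoint on A)) (hunion : ⋃ n, A n = univ) :
    ∃ z ∈ G, ∀ᵐ ω ∂P, ∀ n, ω ∈ A n → f z ω = f (y n) ω := by
  obtain ⟨z, hzG, hz⟩ := hCC y hy A hA (fun _ _ hij => hdisj hij) hunion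
  refine ⟨z, hzG, ?_⟩
  filter_upwards [ae_all_iff.2 fun n => hloc z (A n) (hA n),
    ae_all_iff.2 fun n => hloc (y n) (A n) (hA n)] with ω hzω hyω n hn
  rw [hzω n hn, hz n, ← hyω n hn]

theorem HasCC.exists_mem_ae_exists_eq (hCC : N.HasCC G) (hloc : N.LocalProp f)
    {y : ℕ → E} (hy : ∀ n, y n ∈ G) {B : ℕ → Set Ω} (hB : ∀ n, MeasurableSet (B n))
    (hcover : ∀ᵐ ω ∂P, ∃ n, ω ∈ B n) :
    ∃ z ∈ G, ∀ᵐ ω ∂P, ∃ n, ω ∈ B n ∧ f z ω = f (y n) ω := by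
  -- Glue along `disjointed C`, where `C n` adds the null set not covered by the `B m` to `B n`.
  set C : ℕ → Set Ω := fun n => B n ∪ (⋃ m, B m)ᶜ
  have hC : ⋃ n, C n = univ := by rw [← iUnion_union, union_compl_self]
  have hunion : ⋃ n, disjointed C n = univ := by rw [iUnion_disjointed, hC]
  obtain ⟨z, hzG, hz⟩ := hCC.exists_mem_ae_eq_of_partition hloc hy
    (MeasurableSet.disjointed fun n => (hB n).union (MeasurableSet.iUnion hB).compl)
    (disjoint_disjointed C) hunion
  refine ⟨z, hzG, ?_⟩
  filter_upwards [hz, hcover] with ω hzω ⟨m, hm⟩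
  obtain ⟨n, hn⟩ := mem_iUnion.1 (hunion ▸ mem_univ ω)
  refine ⟨n, ?_, hzω n hn⟩
  exact (disjointed_subset C n hn).resolve_right fun h => h (mem_iUnion.2 ⟨m, hm⟩)

variable [IsFiniteMeasure P] {ε : L0 P}

theorem HasCC.exists_mem_ae_le_add_of_isInfOn (hCC : N.HasCC G) (hloc : N.LocalProp f)
    (hG : G.Nonempty) (hbdd : BddBelowOn f G) (hε : ε ∈ L0pp P) (hη : IsInfOn f G η) :
    ∃ x ∈ G, ∀ᵐ ω ∂P, f x ω ≤ η ω + (ε ω : EReal) := by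
  obtain ⟨ξ, hξ⟩ := hbdd
  obtain ⟨y, hyG, hyη⟩ := hη.exists_seq_ae_iInf_le hG
  have hcover : ∀ᵐ ω ∂P, ∃ n, ω ∈ {ω | f (y n) ω ≤ η ω + (ε ω : EReal)} := by
    filter_upwards [hyη, ae_all_iff.2 fun n => hξ _ (hyG n), hε] with ω hle hlow hpos
    have hbot : η ω ≠ ⊥ := ne_bot_of_le_ne_bot (EReal.coe_ne_bot _) ((le_iInf hlow).trans hle)
    exact EReal.exists_le_add_of_iInf_le hpos hbot hle
  have hB : ∀ n, MeasurableSet {ω | f (y n) ω ≤ η ω + (ε ω : EReal)} := fun n =>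
    measurableSet_le (f (y n)).measurable
      (η.measurable.add (measurable_coe_real_ereal.comp ε.measurable))
  obtain ⟨z, hzG, hz⟩ := hCC.exists_mem_ae_exists_eq hloc hyG hB hcover
  refine ⟨z, hzG, ?_⟩
  filter_upwards [hz] with ω ⟨n, hn, hzn⟩
  exact hzn ▸ hn

theorem HasCC.exists_mem_ae_sub_le_of_isSupOn (hCC : N.HasCC G) (hloc : N.LocalProp f)
    (hG : G.Nonempty) (hbdd : BddAboveOn f G) (hε : ε ∈ L0pp P) (hη : IsSupOn f G η) :
    ∃ x ∈ G, ∀ᵐ ω ∂P, η ω - (ε ω : EReal) ≤ f x ω := by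
  obtain ⟨ξ, hξ⟩ := hbdd
  obtain ⟨y, hyG, hyη⟩ := hη.exists_seq_ae_le_iSup hG
  have hcover : ∀ᵐ ω ∂P, ∃ n, ω ∈ {ω | η ω - (ε ω : EReal) ≤ f (y n) ω} := by
    filter_upwards [hyη, ae_all_iff.2 fun n => hξ _ (hyG n), hε] with ω hle hup hpos
    have htop : η ω ≠ ⊤ := ne_top_of_le_ne_top (EReal.coe_ne_top _) (hle.trans (iSup_le hup))
    exact EReal.exists_sub_le_of_le_iSup hpos htop hle
  have hB : ∀ n, MeasurableSet {ω | η ω - (ε ω : EReal) ≤ f (y n) ω} := fun n =>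
    measurableSet_le (η.measurable.sub (measurable_coe_real_ereal.comp ε.measurable))
      (f (y n)).measurable
  obtain ⟨z, hzG, hz⟩ := hCC.exists_mem_ae_exists_eq hloc hyG hB hcover
  refine ⟨z, hzG, ?_⟩
  filter_upwards [hz] with ω ⟨n, hn, hzn⟩
  exact hzn ▸ hn

end RNModule

end

/-- Theorem 3.5. If `G` has the countable concatenation property, `f` has
the local property and `f|_G` is proper and bounded from below (resp. from above) on `G`,
then for each `ε ∈ L⁰₊₊` there is `x_ε ∈ G` with `f(x_ε) ≤ ⋀f(G) + ε`
(resp. `f(x_ε) ≥ ⋁f(G) - ε`). -/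
theorem approx_inf_and_sup
    {Ω : Type*} [MeasurableSpace Ω] {P : Measure Ω} [IsProbabilityMeasure P]
    {E : Type*} [AddCommGroup E] (N : RNModule P E)
    (G : Set E) (hCC : N.HasCC G)
    (f : E → L0e P) (hloc : N.LocalProp f) (hproper : ProperOn f G) :
    (BddBelowOn f G → ∀ ε ∈ L0pp P, ∀ η : L0e P, IsInfOn f G η →
      ∃ x ∈ G, ∀ᵐ ω ∂P, f x ω ≤ η ω + (ε ω : EReal)) ∧
    (BddAboveOn f G → ∀ ε ∈ L0pp P, ∀ η : L0e P, IsSupOn f G η →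
      ∃ x ∈ G, ∀ᵐ ω ∂P, η ω - (ε ω : EReal) ≤ f x ω) := by
  obtain ⟨-, x₀, hx₀, -⟩ := hproper
  exact ⟨fun hbdd _ hε _ hη => hCC.exists_mem_ae_le_add_of_isInfOn hloc ⟨x₀, hx₀⟩ hbdd hε hη,
    fun hbdd _ hε _ hη => hCC.exists_mem_ae_sub_le_of_isSupOn hloc ⟨x₀, hx₀⟩ hbdd hε hη⟩

end GYY
end

section
/- Precise Ekeland's variational principle under 𝒯_c: Let (E,‖·‖) be a 𝒯_c-complete RN module over ℝ with base (Ω,𝓕,P) such that E has the countable concatenation property, ε ∈ L⁰₊₊(𝓕), and φ : E → L̄⁰(𝓕) a function with the local property. If G ⊆ E is a 𝒯_c-closed subset with the countable concatenation property and the restriction of φ to G is proper, 𝒯_c-lower semicontinuous and bounded from below on G, then for each point x₀ ∈ G satisfying φ(x₀) ≤ ⋀φ(G) + ε and each α ∈ L⁰₊₊(𝓕), there exists z ∈ G such that: (1) φ(z) ≤ φ(x₀) − α·‖z−x₀‖; (2) ‖z−x₀‖ ≤ α⁻¹·ε; (3) for each x ∈ G with x ≠ z, φ(x) ≰ φ(z)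 − α·‖x−z‖ (i.e. there exists A ∈ 𝓕 with P(A) > 0 such that φ(x) > φ(z) − α·‖x−z‖ a.s. on A). -/
open MeasureTheory ENNReal Set Filter

namespace GYY

variable {Ω : Type*} [MeasurableSpace Ω]

/-!
Ekeland's iteration, made random. Let `S(w) = {u ∈ G : φ(u) + α‖u - w‖ ≤ φ(w)}`; these sets are
transitive and inherit countable concatenation from `G`. Starting at `x₀`, pick
`x_{n+1} ∈ S(x_n)` with `φ(x_{n+1}) ≤ φ(u) + 2⁻ⁿ` for every `u ∈ S(x_n)`. Such a near-minimiser
exists because `φ(S(x_n))` is closed under pairwise minima, so its essential infimum is the a.s.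
limit of a sequence in it (minimise `∫ arctan ∘ φ`); concatenating that sequence along the events
where it is `2⁻ⁿ`-close to the infimum gives the point. Then `α‖u - x_{n+1}‖ ≤ 2⁻ⁿ` on all of
`S(x_{n+1})`, so `(x_n)` is a.s. Cauchy with rate `2⁻ⁿ/α`. Its concatenations along the events
`{2⁻ⁿ/α ≤ e}`, `e ∈ L⁰₊₊`, form a `d_c`-Cauchy net, whose limit `z ∈ G` is also the a.s. limit of
`(x_n)`. Lower semicontinuity, transferred to a.s. convergence by concatenation, puts `z` into
every `S(x_n)`, which forces `S(z) = {z}`: this is (3), while (1) is `z ∈ S(x₀)` and (2) follows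
from (1) and `⋀φ(G) ≤ φ(z)`.
-/

open Topology

section L0

variable {P : Measure Ω}

lemma coeFn_indL0 (A : Set Ω) (hA : MeasurableSet A) :
    indL0 P A hA =ᵐ[P] A.indicator 1 :=
  AEEqFun.coeFn_mk _ _

lemma const_mem_L0pp {t : ℝ} (ht : 0 < t) : AEEqFun.const Ω t ∈ L0pp P := by
  filter_upwards [AEEqFun.coeFn_const Ω (μ := P) t] with ω h
  rw [h]
  exact ht

lemma ae_nonneg_of_mem_L0pp {ε : L0 P} (h : ε ∈ L0pp P) : ∀ᵐ ω ∂P, 0 ≤ ε ω :=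
  Eventually.mono (p := fun ω => 0 < ε ω) h fun _ h => h.le

lemma inf_mem_L0pp {ε₁ ε₂ : L0 P} (h₁ : ε₁ ∈ L0pp P) (h₂ : ε₂ ∈ L0pp P) :
    ε₁ ⊓ ε₂ ∈ L0pp P := by
  filter_upwards [h₁, h₂, AEEqFun.coeFn_inf ε₁ ε₂] with ω h₁ h₂ h
  rw [h]
  exact lt_min h₁ h₂

instance : SemilatticeInf (L0pp P) := Subtype.semilatticeInf fun _ _ => inf_mem_L0pp

instance : Nonempty (L0pp P) := ⟨⟨_, const_mem_L0pp one_pos⟩⟩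

lemma mem_iInf_L0pp_principal_iff {X : Type*} {g : X → Ω → ℝ} {S : Set X} :
    S ∈ ⨅ ε ∈ L0pp P, 𝓟 {x | ∀ᵐ ω ∂P, g x ω ≤ ε ω} ↔
      ∃ ε ∈ L0pp P, {x | ∀ᵐ ω ∂P, g x ω ≤ ε ω} ⊆ S := by
  have hmono : Monotone fun ε : L0pp P => 𝓟 {x | ∀ᵐ ω ∂P, g x ω ≤ ε.1 ω} := fun _ _ h =>
    principal_mono.2 fun x hx => by
      filter_upwards [hx, AEEqFun.coeFn_le.2 h] with ω h₁ h₂ using h₁.trans h₂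
  rw [iInf_subtype', mem_iInf_of_directed hmono.directed_ge]
  simp [mem_principal]

end L0

namespace RNModule

variable {P : Measure Ω} {E : Type*} [AddCommGroup E] (N : RNModule P E)

lemma smul_sub (ξ : L0 P) (x y : E) : N.smul ξ (x - y) = N.smul ξ x - N.smul ξ y := by
  rw [eq_sub_iff_add_eq, ← N.smul_add, sub_add_cancel]

lemma zero_smul (x : E) : N.smul 0 x = 0 := by
  have h := N.add_smul 0 0 x
  rwa [add_zero, left_eq_add] at h

lemma neg_one_smul (x : E) : N.smul (-1) x = -x := by
  have h := N.add_smul 1 (-1) x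
  rw [add_neg_cancel, N.zero_smul, N.one_smul] at h
  exact (neg_eq_of_add_eq_zero_right h.symm).symm

lemma nm_zero : N.nm 0 = 0 := (N.nm_eq_zero_iff 0).2 rfl

lemma nm_neg (x : E) : N.nm (-x) =ᵐ[P] N.nm x := by
  filter_upwards [N.nm_smul (-1) x, AEEqFun.coeFn_neg (1 : L0 P),
    AEEqFun.coeFn_one (β := ℝ) (μ := P)] with ω h h₁ h₂
  rw [← N.neg_one_smul, h, h₁, Pi.neg_apply, h₂]
  simp

lemma nm_sub_comm (x y : E) : N.nm (x - y) =ᵐ[P] N.nm (y - x) := by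
  simpa using N.nm_neg (y - x)

lemma nm_sub_le (x y z : E) : ∀ᵐ ω ∂P, N.nm (x - z) ω ≤ N.nm (x - y) ω + N.nm (y - z) ω := by
  simpa using N.nm_add_le (x - y) (y - z)

lemma nm_sub_congr (y u w : E) :
    ∀ᵐ ω ∂P, N.nm (y - u) ω = 0 → N.nm (y - w) ω = N.nm (u - w) ω := by
  filter_upwards [N.nm_sub_le y u w, N.nm_sub_le u y w, N.nm_sub_comm y u] with ω h₁ h₂ h₃ h
  rw [h₃] at h
  linarith

lemma eq_of_forall_ae_nm_sub_le {y z : E} {b : ℕ → Ω → ℝ}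
    (hb0 : ∀ᵐ ω ∂P, Tendsto (fun n => b n ω) atTop (𝓝 0))
    (h : ∀ n, ∀ᵐ ω ∂P, N.nm (y - z) ω ≤ b n ω) : y = z := by
  rw [← sub_eq_zero, ← N.nm_eq_zero_iff]
  refine AEEqFun.ext ?_
  filter_upwards [ae_all_iff.2 h, hb0, N.nm_nonneg (y - z), AEEqFun.coeFn_zero (β := ℝ) (μ := P)]
    with ω h hb0 hnn h0
  rw [h0]
  exact le_antisymm (ge_of_tendsto' hb0 h) hnn

variable {N}

lemma nm_sub_eq_zero_of_smul_indL0_eq {A : Set Ω} {hA : MeasurableSet A} {y u : E}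
    (h : N.smul (indL0 P A hA) y = N.smul (indL0 P A hA) u) :
    ∀ᵐ ω ∂P, ω ∈ A → N.nm (y - u) ω = 0 := by
  have h0 : N.nm (N.smul (indL0 P A hA) (y - u)) = 0 := by
    rw [N.smul_sub, h, sub_self, N.nm_zero]
  filter_upwards [N.nm_smul (indL0 P A hA) (y - u), coeFn_indL0 (P := P) A hA,
    AEEqFun.coeFn_zero (β := ℝ) (μ := P)] with ω h₁ h₂ h₃ hω
  rw [h0, h₃, h₂, Set.indicator_of_mem hω] at h₁
  simpa using h₁.symm

/-- Countable concatenation along an a.e. cover, recording what a function `φ` with the local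
property and the random norm see of the concatenated point. -/
def HasGluing (φ : E → L0e P) (S : Set E) : Prop :=
  ∀ u : ℕ → E, (∀ n, u n ∈ S) → ∀ C : ℕ → Set Ω, (∀ n, MeasurableSet (C n)) →
    (∀ᵐ ω ∂P, ∃ n, ω ∈ C n) →
      ∃ y ∈ S, ∀ᵐ ω ∂P, ∃ n, ω ∈ C n ∧ φ y ω = φ (u n) ω ∧ N.nm (y - u n) ω = 0

lemma HasCC.hasGluing {φ : E → L0e P} {S : Set E} (hS : N.HasCC S) (hloc : N.LocalProp φ) :
    N.HasGluing φ S := by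
  intro u hu C hC hcov
  -- the points outside `⋃ C`, a null set, are thrown into every piece
  set D : ℕ → Set Ω := fun n => C n ∪ (⋃ k, C k)ᶜ
  have hA : ∀ n, MeasurableSet (disjointed D n) :=
    MeasurableSet.disjointed fun n => (hC n).union (MeasurableSet.iUnion hC).compl
  have hcover : ⋃ n, disjointed D n = univ := by
    rw [iUnion_disjointed, eq_univ_iff_forall]
    intro ω
    by_cases h : ω ∈ ⋃ k, C k
    · obtain ⟨k, hk⟩ := mem_iUnion.1 h
      exact mem_iUnion.2 ⟨k, Or.inl hk⟩
    · exact mem_iUnion.2 ⟨0, Or.inr h⟩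
  obtain ⟨y, hyS, hy⟩ := hS u hu (disjointed D) hA (fun i j hij => disjoint_disjointed D hij) hcover
  refine ⟨y, hyS, ?_⟩
  have hφ : ∀ᵐ ω ∂P, ∀ n, ω ∈ disjointed D n → φ y ω = φ (u n) ω := ae_all_iff.2 fun n => by
    filter_upwards [hloc y _ (hA n), hloc (u n) _ (hA n)] with ω h₁ h₂ hω
    rw [h₁ hω, h₂ hω, hy n]
  have hnm : ∀ᵐ ω ∂P, ∀ n, ω ∈ disjointed D n → N.nm (y - u n) ω = 0 :=
    ae_all_iff.2 fun n => nm_sub_eq_zero_of_smul_indL0_eq (hy n)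
  filter_upwards [hcov, hφ, hnm] with ω hω h₁ h₂
  obtain ⟨n, hn⟩ := mem_iUnion.1 (hcover ▸ mem_univ ω)
  refine ⟨n, ?_, h₁ n hn, h₂ n hn⟩
  exact (disjointed_subset D n hn).resolve_right fun h => h (mem_iUnion.2 hω)

end RNModule

lemma exists_seq_of_step {α : Type*} {p : α → Prop} {r : ℕ → α → α → Prop} {a : α} (ha : p a)
    (h : ∀ n x, p x → ∃ y, p y ∧ r n x y) :
    ∃ x : ℕ → α, x 0 = a ∧ ∀ n, p (x n) ∧ r n (x n) (x (n + 1)) := by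
  choose next hnext using h
  let x : ℕ → {x // p x} := fun n =>
    Nat.rec ⟨a, ha⟩ (fun n y => ⟨next n y.1 y.2, (hnext n y.1 y.2).1⟩) n
  exact ⟨fun n => (x n).1, rfl, fun n => ⟨(x n).2, (hnext n _ (x n).2).2⟩⟩

section Arctan

open Real

variable {P : Measure Ω} [IsFiniteMeasure P]

lemma norm_arctan_le_two (x : ℝ) : ‖arctan x‖ ≤ 2 := by
  rw [Real.norm_eq_abs, abs_le]
  constructor <;> linarith [neg_pi_div_two_lt_arctan x, arctan_lt_pi_div_two x, pi_le_four]

lemma integrable_arctan_comp {f : Ω → ℝ} (hf : AEStronglyMeasurable f P) :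
    Integrable (fun ω => arctan (f ω)) P :=
  .of_bound (continuous_arctan.comp_aestronglyMeasurable hf) 2
    (.of_forall fun _ => norm_arctan_le_two _)

lemma tendsto_integral_arctan_comp {f : ℕ → Ω → ℝ} {g : Ω → ℝ}
    (hf : ∀ n, AEStronglyMeasurable (f n) P)
    (hfg : ∀ᵐ ω ∂P, Tendsto (fun n => f n ω) atTop (𝓝 (g ω))) :
    Tendsto (fun n => ∫ ω, arctan (f n ω) ∂P) atTop (𝓝 (∫ ω, arctan (g ω) ∂P)) :=
  tendsto_integral_of_dominated_convergence (fun _ => 2)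
    (fun n => continuous_arctan.comp_aestronglyMeasurable (hf n)) (integrable_const 2)
    (fun _ => .of_forall fun _ => norm_arctan_le_two _)
    (hfg.mono fun _ h => (continuous_arctan.tendsto _).comp h)

lemma ae_le_of_integral_arctan_le {f g : Ω → ℝ} (hf : AEStronglyMeasurable f P)
    (hg : AEStronglyMeasurable g P) (hfg : f ≤ᵐ[P] g)
    (h : ∫ ω, arctan (g ω) ∂P ≤ ∫ ω, arctan (f ω) ∂P) : g ≤ᵐ[P] f := by
  have hle : (fun ω => arctan (f ω)) ≤ᵐ[P] fun ω => arctan (g ω) :=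
    hfg.mono fun _ h => arctan_strictMono.monotone h
  have heq := (integral_eq_iff_of_ae_le (integrable_arctan_comp hf) (integrable_arctan_comp hg)
    hle).1 (le_antisymm (integral_mono_ae (integrable_arctan_comp hf)
      (integrable_arctan_comp hg) hle) h)
  filter_upwards [heq] with ω h
  exact (arctan_injective h).ge

lemma exists_antitone_seq_integral_arctan_le {ι : Type*} {f : ι → Ω → ℝ} {S : Set ι}
    (hS : S.Nonempty) (hf : ∀ i, Measurable (f i))
    (hinf : ∀ i ∈ S, ∀ j ∈ S, ∃ k ∈ S, f k =ᵐ[P] f i ⊓ f j) :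
    ∃ v : ℕ → ι, (∀ n, v n ∈ S) ∧ (∀ n, f (v (n + 1)) ≤ᵐ[P] f (v n)) ∧
      ∀ n : ℕ, ∫ ω, arctan (f (v n) ω) ∂P ≤
        sInf ((fun i => ∫ ω, arctan (f i ω) ∂P) '' S) + 1 / (n + 1) := by
  set m : ι → ℝ := fun i => ∫ ω, arctan (f i ω) ∂P
  set I := sInf (m '' S)
  have hu : ∀ n : ℕ, ∃ i ∈ S, m i < I + 1 / (n + 1) := fun n =>
    let ⟨_, ⟨i, hi, rfl⟩, h⟩ := exists_lt_of_csInf_lt (hS.image m)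
      (lt_add_of_pos_right I (by positivity))
    ⟨i, hi, h⟩
  choose u huS hum using hu
  obtain ⟨v, hv0, hv⟩ := exists_seq_of_step (p := (· ∈ S))
    (r := fun n i k => f k ≤ᵐ[P] f i ∧ m k ≤ I + 1 / ((n + 1 : ℕ) + 1)) (huS 0) fun n i hi => by
      obtain ⟨k, hkS, hk⟩ := hinf i hi _ (huS (n + 1))
      refine ⟨k, hkS, hk.trans_le (.of_forall fun ω => inf_le_left), ?_⟩
      refine le_trans (integral_mono_ae (integrable_arctan_comp (hf k).aestronglyMeasurable)
        (integrable_arctan_comp (hf _).aestronglyMeasurable) ?_) (hum (n + 1)).le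
      filter_upwards [hk] with ω hω
      exact arctan_strictMono.monotone (hω.trans_le inf_le_right)
  refine ⟨v, fun n => (hv n).1, fun n => (hv n).2.1, ?_⟩
  rintro (_ | n)
  · exact hv0 ▸ (hum 0).le
  · exact (hv n).2.2

theorem exists_seq_tendsto_ae_le_of_inf_mem {ι : Type*} {f : ι → Ω → ℝ} {S : Set ι}
    (hS : S.Nonempty) (hf : ∀ i, Measurable (f i))
    (hinf : ∀ i ∈ S, ∀ j ∈ S, ∃ k ∈ S, f k =ᵐ[P] f i ⊓ f j)
    {ξ : Ω → ℝ} (hξ : ∀ i ∈ S, ξ ≤ᵐ[P] f i) :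
    ∃ v : ℕ → ι, (∀ n, v n ∈ S) ∧ ∃ h : Ω → ℝ, Measurable h ∧
      (∀ᵐ ω ∂P, Tendsto (fun n => f (v n) ω) atTop (𝓝 (h ω))) ∧ ∀ i ∈ S, h ≤ᵐ[P] f i := by
  -- minimise `i ↦ ∫ arctan ∘ f i`, which is bounded, over `S`
  set I := sInf ((fun i => ∫ ω, arctan (f i ω) ∂P) '' S)
  have hbdd : BddBelow ((fun i => ∫ ω, arctan (f i ω) ∂P) '' S) := by
    refine ⟨-(P.real univ * 2), ?_⟩
    rintro _ ⟨i, -, rfl⟩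
    simpa using integral_mono (integrable_const (-2 : ℝ))
      (integrable_arctan_comp (hf i).aestronglyMeasurable)
      fun ω => neg_le_of_abs_le (norm_arctan_le_two (f i ω))
  have hI_le : ∀ {w : ℕ → ι} {g : Ω → ℝ}, (∀ n, w n ∈ S) →
      (∀ᵐ ω ∂P, Tendsto (fun n => f (w n) ω) atTop (𝓝 (g ω))) → I ≤ ∫ ω, arctan (g ω) ∂P :=
    fun hw hg => ge_of_tendsto
      (tendsto_integral_arctan_comp (fun n => (hf _).aestronglyMeasurable) hg)
      (.of_forall fun n => csInf_le hbdd ⟨_, hw n, rfl⟩)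
  obtain ⟨v, hvS, hanti, hmv⟩ := exists_antitone_seq_integral_arctan_le (P := P) hS hf hinf
  set h : Ω → ℝ := fun ω => ⨅ n, f (v n) ω
  have htend : ∀ᵐ ω ∂P, Tendsto (fun n => f (v n) ω) atTop (𝓝 (h ω)) := by
    filter_upwards [ae_all_iff.2 hanti, ae_all_iff.2 fun n => hξ _ (hvS n)] with ω hanti hξω
    refine tendsto_atTop_ciInf (antitone_nat_of_succ_le hanti) ⟨ξ ω, ?_⟩
    rintro _ ⟨n, rfl⟩
    exact hξω n
  have hmeas : Measurable h := Measurable.iInf fun n => hf (v n)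
  have hIh : ∫ ω, arctan (h ω) ∂P ≤ I := by
    have hlim := (tendsto_const_nhds (x := I)).add
      (tendsto_one_div_add_atTop_nhds_zero_nat (𝕜 := ℝ))
    rw [add_zero] at hlim
    exact le_of_tendsto_of_tendsto'
      (tendsto_integral_arctan_comp (fun n => (hf _).aestronglyMeasurable) htend) hlim hmv
  refine ⟨v, hvS, h, hmeas, htend, fun i hi => ?_⟩
  -- `f i ⊓ h` is again such a limit, so its `arctan`-integral is at least `I`
  choose! k hkS hk using hinf i hi
  have hmin : ∀ᵐ ω ∂P, Tendsto (fun n => f (k (v n)) ω) atTop (𝓝 (f i ω ⊓ h ω)) := by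
    filter_upwards [htend, ae_all_iff.2 fun n => hk _ (hvS n)] with ω hω hk
    simpa only [hk, Pi.inf_apply] using tendsto_const_nhds.min hω
  have hle := ae_le_of_integral_arctan_le ((hf i).inf hmeas).aestronglyMeasurable
    hmeas.aestronglyMeasurable (.of_forall fun ω => inf_le_right)
    (hIh.trans (hI_le (fun n => hkS _ (hvS n)) hmin))
  filter_upwards [hle] with ω hω
  exact hω.trans inf_le_left

end Arctan

namespace RNModule

variable {P : Measure Ω} {E : Type*} [AddCommGroup E] {N : RNModule P E} {φ : E → L0e P}
  {S G : Set E}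

lemma HasGluing.exists_eq_min (hS : N.HasGluing φ S) {p q : E} (hp : p ∈ S) (hq : q ∈ S) :
    ∃ w ∈ S, ∀ᵐ ω ∂P, φ w ω = min (φ p ω) (φ q ω) := by
  obtain ⟨w, hwS, hw⟩ := hS (fun n => if n = 0 then p else q)
    (fun n => by split_ifs <;> assumption)
    (fun n => if n = 0 then {ω | φ p ω ≤ φ q ω} else {ω | φ q ω ≤ φ p ω})
    (fun n => by split_ifs <;> exact measurableSet_le (φ _).measurable (φ _).measurable)
    (.of_forall fun ω => (le_total (φ p ω) (φ q ω)).elim (fun h => ⟨0, h⟩) fun h => ⟨1, h⟩)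
  refine ⟨w, hwS, ?_⟩
  filter_upwards [hw] with ω hω
  obtain ⟨_ | n, hn, h, -⟩ := hω
  · simp only [↓reduceIte] at hn h
    exact h.trans (min_eq_left hn).symm
  · simp only [Nat.add_one_ne_zero, ↓reduceIte] at hn h
    exact h.trans (min_eq_right hn).symm

lemma HasGluing.exists_ae_le_add [IsFiniteMeasure P] (hS : N.HasGluing φ S) (hne : S.Nonempty)
    {ξ : Ω → ℝ} (hξ : ∀ u ∈ S, ∀ᵐ ω ∂P, (ξ ω : EReal) ≤ φ u ω)
    (htop : ∀ u ∈ S, ∀ᵐ ω ∂P, φ u ω < ⊤) {δ : ℝ} (hδ : 0 < δ) :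
    ∃ v ∈ S, ∀ u ∈ S, ∀ᵐ ω ∂P, φ v ω ≤ φ u ω + δ := by
  set f : E → Ω → ℝ := fun u ω => (φ u ω).toReal
  have hf : ∀ u, Measurable (f u) := fun u => by fun_prop
  have hcoe : ∀ u ∈ S, ∀ᵐ ω ∂P, (f u ω : EReal) = φ u ω := fun u hu => by
    filter_upwards [hξ u hu, htop u hu] with ω h₁ h₂
    exact EReal.coe_toReal h₂.ne (ne_bot_of_le_ne_bot (EReal.coe_ne_bot _) h₁)
  have hinf : ∀ p ∈ S, ∀ q ∈ S, ∃ w ∈ S, f w =ᵐ[P] f p ⊓ f q := fun p hp q hq => by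
    obtain ⟨w, hwS, hw⟩ := hS.exists_eq_min hp hq
    refine ⟨w, hwS, ?_⟩
    filter_upwards [hw, hcoe w hwS, hcoe p hp, hcoe q hq] with ω h h₁ h₂ h₃
    rw [← h₁, ← h₂, ← h₃, ← EReal.coe_strictMono.monotone.map_min] at h
    exact_mod_cast h
  have hξf : ∀ u ∈ S, ξ ≤ᵐ[P] f u := fun u hu => by
    filter_upwards [hξ u hu, hcoe u hu] with ω h₁ h₂
    rw [← h₂] at h₁
    exact_mod_cast h₁
  obtain ⟨v, hvS, h, hh, htend, hle⟩ := exists_seq_tendsto_ae_le_of_inf_mem hne hf hinf hξf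
  obtain ⟨y, hyS, hy⟩ := hS v hvS (fun n => {ω | f (v n) ω ≤ h ω + δ})
    (fun n => measurableSet_le (hf _) (hh.add_const δ))
    (htend.mono fun ω hω => (hω.eventually (eventually_le_nhds (lt_add_of_pos_right _ hδ))).exists)
  refine ⟨y, hyS, fun u hu => ?_⟩
  filter_upwards [hy, hle u hu, hcoe u hu, ae_all_iff.2 fun n => hcoe _ (hvS n)]
    with ω hω h₁ h₂ h₃
  obtain ⟨n, hn, hyn, -⟩ := hω
  rw [hyn, ← h₃ n, ← h₂, ← EReal.coe_add]
  exact EReal.coe_le_coe_iff.2 (by linarith [show f (v n) ω ≤ h ω + δ from hn])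

lemma HasCC.exists_net_of_cauchy (hG : N.HasCC G) {y : ℕ → E} (hy : ∀ n, y n ∈ G)
    {b : ℕ → Ω → ℝ} (hb : ∀ n, Measurable (b n))
    (hb0 : ∀ᵐ ω ∂P, Tendsto (fun n => b n ω) atTop (𝓝 0))
    (hcauchy : ∀ n m, n ≤ m → ∀ᵐ ω ∂P, N.nm (y m - y n) ω ≤ b n ω) :
    ∃ Z : L0pp P → E, (∀ e, Z e ∈ G) ∧
      (∀ e f, ∀ᵐ ω ∂P, N.nm (Z e - Z f) ω ≤ max (e.1 ω) (f.1 ω)) ∧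
      ∀ e n, ∀ᵐ ω ∂P, N.nm (y n - Z e) ω ≤ max (e.1 ω) (b n ω) := by
  have hyy : ∀ᵐ ω ∂P, ∀ n m, N.nm (y m - y n) ω ≤ max (b n ω) (b m ω) := by
    filter_upwards [ae_all_iff.2 fun n => ae_all_iff.2 fun m =>
        eventually_imp_distrib_left.2 (hcauchy n m),
      ae_all_iff.2 fun n => ae_all_iff.2 fun m => N.nm_sub_comm (y m) (y n)] with ω h hsymm n m
    rcases le_total n m with hnm | hmn
    · exact (h n m hnm).trans (le_max_left _ _)
    · exact (hsymm n m).trans_le ((h m n hmn).trans (le_max_right _ _))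
  choose Z hZG hZ using fun e : L0pp P =>
    (hG.hasGluing (φ := fun _ => 0) fun _ _ _ => .of_forall fun _ _ => rfl) y hy
      (fun n => {ω | b n ω ≤ e.1 ω}) (fun n => measurableSet_le (hb n) e.1.measurable)
      (by filter_upwards [hb0, e.2] with ω h he using (h.eventually (eventually_le_nhds he)).exists)
  have hZw : ∀ e w, ∀ᵐ ω ∂P, ∃ n, b n ω ≤ e.1 ω ∧ N.nm (Z e - w) ω = N.nm (y n - w) ω :=
    fun e w => by
      filter_upwards [hZ e, ae_all_iff.2 fun n => N.nm_sub_congr (Z e) (y n) w] with ω hω h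
      obtain ⟨n, hn, -, h0⟩ := hω
      exact ⟨n, hn, h n h0⟩
  have hyZ : ∀ e n, ∀ᵐ ω ∂P, N.nm (y n - Z e) ω ≤ max (e.1 ω) (b n ω) := fun e n => by
    filter_upwards [hZw e (y n), hyy, N.nm_sub_comm (y n) (Z e)] with ω hω hyy hsymm
    obtain ⟨k, hk, h⟩ := hω
    rw [hsymm, h]
    exact (hyy n k).trans (max_le_max_left _ hk |>.trans_eq (max_comm _ _))
  refine ⟨Z, hZG, fun e f => ?_, hyZ⟩
  filter_upwards [hZw e (Z f), ae_all_iff.2 (hyZ f)] with ω hω hyZ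
  obtain ⟨k, hk, h⟩ := hω
  rw [h]
  exact (hyZ k).trans (max_le_max_left _ hk |>.trans_eq (max_comm _ _))

lemma cComplete.exists_tendsto_of_net (hcomp : N.cComplete) (hGcl : N.cClosed G)
    {Z : L0pp P → E} (hZG : ∀ e, Z e ∈ G)
    (hZ : ∀ e f, ∀ᵐ ω ∂P, N.nm (Z e - Z f) ω ≤ max (e.1 ω) (f.1 ω)) :
    ∃ z ∈ G, Tendsto Z atBot (N.cNhds z) := by
  have hcauchy : map Z atBot ×ˢ map Z atBot ≤ N.cUniformity := by
    refine le_iInf₂ fun ε hε => le_principal_iff.2 <| mem_prod_iff.2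
      ⟨_, image_mem_map (Iic_mem_atBot ⟨ε, hε⟩), _, image_mem_map (Iic_mem_atBot ⟨ε, hε⟩), ?_⟩
    rintro ⟨_, _⟩ ⟨⟨e, he, rfl⟩, ⟨f, hf, rfl⟩⟩
    filter_upwards [hZ e f, AEEqFun.coeFn_le.2 he, AEEqFun.coeFn_le.2 hf] with ω h h₁ h₂
      using h.trans (max_le h₁ h₂)
  obtain ⟨z, hz⟩ := hcomp _ inferInstance hcauchy
  exact ⟨z, hGcl z (NeBot.mono inferInstance
    (le_inf hz (le_principal_iff.2 (mem_map.2 (univ_mem' hZG))))), hz⟩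

theorem HasCC.exists_ae_tendsto_of_cauchy (hcomp : N.cComplete) (hGcl : N.cClosed G)
    (hG : N.HasCC G) {y : ℕ → E} (hy : ∀ n, y n ∈ G) {b : ℕ → Ω → ℝ}
    (hb : ∀ n, Measurable (b n)) (hb0 : ∀ᵐ ω ∂P, Tendsto (fun n => b n ω) atTop (𝓝 0))
    (hcauchy : ∀ n m, n ≤ m → ∀ᵐ ω ∂P, N.nm (y m - y n) ω ≤ b n ω) :
    ∃ z ∈ G, ∀ᵐ ω ∂P, Tendsto (fun n => N.nm (y n - z) ω) atTop (𝓝 0) := by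
  obtain ⟨Z, hZG, hZ, hyZ⟩ := hG.exists_net_of_cauchy hy hb hb0 hcauchy
  obtain ⟨z, hzG, hz⟩ := hcomp.exists_tendsto_of_net hGcl hZG hZ
  refine ⟨z, hzG, ?_⟩
  have hnear : ∀ n (t : ℝ), 0 < t → ∀ᵐ ω ∂P, N.nm (y n - z) ω ≤ max t (b n ω) + t := by
    intro n t ht
    obtain ⟨e, he, hez⟩ := Filter.nonempty_of_mem (inter_mem (Iic_mem_atBot ⟨_, const_mem_L0pp ht⟩)
      (hz (mem_iInf_L0pp_principal_iff.2 ⟨_, const_mem_L0pp ht, subset_rfl⟩)))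
    filter_upwards [hyZ e n, hez, N.nm_sub_le (y n) (Z e) z, AEEqFun.coeFn_le.2 he,
      AEEqFun.coeFn_const Ω (μ := P) t] with ω h₁ h₂ h₃ h₄ h₅
    rw [h₅, Function.const_apply] at h₂ h₄
    linarith [max_le_max_right (b n ω) h₄]
  filter_upwards [ae_all_iff.2 fun n => ae_all_iff.2 fun j : ℕ =>
      hnear n (1 / (j + 1)) Nat.one_div_pos_of_nat, hb0,
    ae_all_iff.2 fun n => N.nm_nonneg (y n - z)] with ω h hb0 hnn
  have hle : ∀ n, N.nm (y n - z) ω ≤ max (b n ω) 0 := fun n => by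
    refine le_of_forall_pos_lt_add fun ε hε => ?_
    obtain ⟨j, hj⟩ := exists_nat_one_div_lt (half_pos hε)
    have hj0 : (0 : ℝ) < 1 / (j + 1) := Nat.one_div_pos_of_nat
    have := h n j
    have : max (1 / ((j : ℝ) + 1)) (b n ω) ≤ max (b n ω) 0 + 1 / (j + 1) :=
      max_le (by linarith [le_max_right (b n ω) 0]) (by linarith [le_max_left (b n ω) 0])
    linarith
  have hmax := hb0.max (tendsto_const_nhds (x := (0 : ℝ)))
  rw [max_self] at hmax
  exact tendsto_of_tendsto_of_tendsto_of_le_of_le tendsto_const_nhds hmax hnn hle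

lemma cLscOn.ae_le_of_tendsto (hlsc : N.cLscOn φ G) (hG : N.HasCC G) (hloc : N.LocalProp φ)
    {y : ℕ → E} (hy : ∀ n, y n ∈ G) {z : E} (hz : z ∈ G)
    (hyz : ∀ᵐ ω ∂P, Tendsto (fun n => N.nm (y n - z) ω) atTop (𝓝 0))
    {r : ℕ → Ω → ℝ} {s : Ω → ℝ} (hr : ∀ n, Measurable (r n)) (hs : Measurable s)
    (hrs : ∀ᵐ ω ∂P, Tendsto (fun n => r n ω) atTop (𝓝 (s ω)))
    (hφr : ∀ n, ∀ᵐ ω ∂P, φ (y n) ω ≤ r n ω) :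
    ∀ᵐ ω ∂P, φ z ω ≤ s ω := by
  set s' : L0 P := AEEqFun.mk s hs.aestronglyMeasurable
  have hs' : s' =ᵐ[P] s := AEEqFun.coeFn_mk _ _
  suffices h : ∀ᵐ ω ∂P, φ z ω ≤ s' ω by
    filter_upwards [h, hs'] with ω h h' using h' ▸ h
  refine hlsc z s' hz (inf_principal_neBot_iff.2 fun U hU => ?_)
  obtain ⟨U₁, hU₁, U₂, hU₂, hU⟩ := mem_prod_iff.1 hU
  obtain ⟨d₁, hd₁, hball₁⟩ := mem_iInf_L0pp_principal_iff.1 hU₁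
  obtain ⟨d₂, hd₂, hball₂⟩ := mem_iInf_L0pp_principal_iff.1 hU₂
  -- glue the `y n` where they are `d₁`-close to `z` and `r n` is `d₂`-close to `s`
  obtain ⟨w, hwG, hw⟩ := hG.hasGluing hloc y hy
    (fun n => {ω | N.nm (y n - z) ω ≤ d₁ ω ∧ |r n ω - s ω| ≤ d₂ ω})
    (fun n => (measurableSet_le (N.nm _).measurable d₁.measurable).inter
      (measurableSet_le ((hr n).sub hs).abs d₂.measurable))
    (by
      filter_upwards [hyz, hrs, hd₁, hd₂] with ω h₁ h₂ hd₁ hd₂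
      exact ((h₁.eventually (eventually_le_nhds hd₁)).and
        ((tendsto_sub_nhds_zero_iff.2 h₂).abs.eventually
          (eventually_le_nhds (by simpa using hd₂)))).exists)
  refine ⟨(w, s' + d₂), hU ⟨hball₁ ?_, hball₂ ?_⟩, hwG, ?_⟩
  · show ∀ᵐ ω ∂P, N.nm (w - z) ω ≤ d₁ ω
    filter_upwards [hw, ae_all_iff.2 fun n => N.nm_sub_congr w (y n) z] with ω hω h
    obtain ⟨n, hn, -, h0⟩ := hω
    exact (h n h0).trans_le hn.1
  · show ∀ᵐ ω ∂P, |(s' + d₂) ω - s' ω| ≤ d₂ ω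
    filter_upwards [AEEqFun.coeFn_add s' d₂, hd₂] with ω h hd₂
    simp [h, abs_of_pos hd₂]
  · filter_upwards [hw, ae_all_iff.2 hφr, hs', AEEqFun.coeFn_add s' d₂] with ω hω h₁ h₂ h₃
    obtain ⟨n, hn, hφ, -⟩ := hω
    rw [hφ, h₃, Pi.add_apply, h₂]
    exact (h₁ n).trans (EReal.coe_le_coe_iff.2 (by linarith [(abs_le.1 hn.2).2]))

end RNModule

lemma le_of_add_le_of_le_add_ereal {a b : EReal} {c d : ℝ} (h₁ : a + c ≤ b) (h₂ : b ≤ a + d)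
    (hb : b ≠ ⊥) (hb' : b ≠ ⊤) : c ≤ d := by
  induction a using EReal.rec with
  | bot => exact absurd (le_bot_iff.1 (h₂.trans_eq (EReal.bot_add _))) hb
  | top => exact absurd (top_le_iff.1 ((EReal.top_add_coe c).symm.trans_le h₁)) hb'
  | coe a =>
    lift b to ℝ using ⟨hb', hb⟩
    rw [← EReal.coe_add, EReal.coe_le_coe_iff] at h₁ h₂
    linarith

lemma exists_pos_measure_of_not_ae {P : Measure Ω} {p : Ω → Prop}
    (hp : MeasurableSet {ω | p ω}) (h : ¬ ∀ᵐ ω ∂P, ¬ p ω) :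
    ∃ A, MeasurableSet A ∧ 0 < P A ∧ ∀ᵐ ω ∂P, ω ∈ A → p ω :=
  ⟨_, hp, pos_iff_ne_zero.2 (by simpa [ae_iff] using h), .of_forall fun _ h => h⟩

lemma tendsto_half_pow_div (a : ℝ) : Tendsto (fun n => (1 / 2 : ℝ) ^ n / a) atTop (𝓝 0) := by
  simpa using (tendsto_pow_atTop_nhds_zero_of_lt_one (by norm_num : (0 : ℝ) ≤ 1 / 2)
    (by norm_num)).div_const a

section Ekeland

variable {P : Measure Ω} {E : Type*} [AddCommGroup E]

def ekelandSet (N : RNModule P E) (φ : E → L0e P) (α : L0 P) (G : Set E) (w : E) : Set E :=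
  {u | u ∈ G ∧ ∀ᵐ ω ∂P, φ u ω + ((α ω * N.nm (u - w) ω : ℝ) : EReal) ≤ φ w ω}

variable {N : RNModule P E} {φ : E → L0e P} {α : L0 P} {G : Set E}

lemma self_mem_ekelandSet {w : E} (hw : w ∈ G) : w ∈ ekelandSet N φ α G w := by
  refine ⟨hw, ?_⟩
  filter_upwards [AEEqFun.coeFn_zero (β := ℝ) (μ := P)] with ω h
  simp [N.nm_zero, h]

lemma ekelandSet_trans (hα : ∀ᵐ ω ∂P, 0 ≤ α ω) {u v w : E} (hu : u ∈ ekelandSet N φ α G v)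
    (hv : v ∈ ekelandSet N φ α G w) : u ∈ ekelandSet N φ α G w := by
  refine ⟨hu.1, ?_⟩
  filter_upwards [N.nm_sub_le u v w, hu.2, hv.2, hα] with ω htri hu hv hα
  calc φ u ω + ((α ω * N.nm (u - w) ω : ℝ) : EReal)
      ≤ φ u ω + ((α ω * N.nm (u - v) ω : ℝ) : EReal) + ((α ω * N.nm (v - w) ω : ℝ) : EReal) := by
        rw [add_assoc, ← EReal.coe_add, ← mul_add]
        gcongr
    _ ≤ φ v ω + ((α ω * N.nm (v - w) ω : ℝ) : EReal) := by gcongr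
    _ ≤ φ w ω := hv

lemma ae_le_of_mem_ekelandSet (hα : ∀ᵐ ω ∂P, 0 ≤ α ω) {u w : E}
    (hu : u ∈ ekelandSet N φ α G w) : ∀ᵐ ω ∂P, φ u ω ≤ φ w ω := by
  filter_upwards [hu.2, hα, N.nm_nonneg (u - w)] with ω h hα hnm
  exact le_trans (le_add_of_nonneg_right (EReal.coe_nonneg.2 (mul_nonneg hα hnm))) h

lemma RNModule.HasGluing.ekelandSet (hG : N.HasGluing φ G) (w : E) :
    N.HasGluing φ (ekelandSet N φ α G w) := by
  intro u hu C hC hcov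
  obtain ⟨y, hyG, hy⟩ := hG u (fun n => (hu n).1) C hC hcov
  refine ⟨y, ⟨hyG, ?_⟩, hy⟩
  filter_upwards [hy, ae_all_iff.2 fun n => (hu n).2,
    ae_all_iff.2 fun n => N.nm_sub_congr y (u n) w] with ω hω hu hnm
  obtain ⟨n, -, hφ, h0⟩ := hω
  rw [hφ, hnm n h0]
  exact hu n

lemma mul_nm_sub_le_of_mem_ekelandSet (hbot : ∀ u ∈ G, ∀ᵐ ω ∂P, ⊥ < φ u ω) {p v : E} {δ : ℝ}
    (hv : v ∈ ekelandSet N φ α G p) (hvtop : ∀ᵐ ω ∂P, φ v ω < ⊤)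
    (hmin : ∀ u ∈ ekelandSet N φ α G p, ∀ᵐ ω ∂P, φ v ω ≤ φ u ω + δ) (hα : ∀ᵐ ω ∂P, 0 ≤ α ω)
    {u : E} (hu : u ∈ ekelandSet N φ α G v) : ∀ᵐ ω ∂P, α ω * N.nm (u - v) ω ≤ δ := by
  filter_upwards [hu.2, hmin u (ekelandSet_trans hα hu hv), hbot v hv.1, hvtop]
    with ω h₁ h₂ hbot htop
  exact le_of_add_le_of_le_add_ereal h₁ h₂ hbot.ne' htop.ne

lemma mem_ekelandSet_of_tendsto (hlsc : N.cLscOn φ G) (hG : N.HasCC G) (hloc : N.LocalProp φ)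
    {w z : E} (hz : z ∈ G) (hwbot : ∀ᵐ ω ∂P, ⊥ < φ w ω) (hwtop : ∀ᵐ ω ∂P, φ w ω < ⊤)
    {u : ℕ → E} (hu : ∀ n, u n ∈ ekelandSet N φ α G w)
    (huz : ∀ᵐ ω ∂P, Tendsto (fun n => N.nm (u n - z) ω) atTop (𝓝 0)) :
    z ∈ ekelandSet N φ α G w := by
  set f : Ω → ℝ := fun ω => (φ w ω).toReal
  have hf : ∀ᵐ ω ∂P, (f ω : EReal) = φ w ω := by
    filter_upwards [hwbot, hwtop] with ω h₁ h₂ using EReal.coe_toReal h₂.ne h₁.ne'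
  have hlim := hlsc.ae_le_of_tendsto hG hloc (fun n => (hu n).1) hz huz
    (r := fun n ω => f ω - α ω * N.nm (u n - w) ω) (s := fun ω => f ω - α ω * N.nm (z - w) ω)
    (fun n => by fun_prop) (by fun_prop) ?_ fun n => ?_
  · refine ⟨hz, ?_⟩
    filter_upwards [hlim, hf] with ω h hf
    rw [← hf, ← sub_add_cancel (f ω) (α ω * N.nm (z - w) ω), EReal.coe_add]
    exact add_le_add_left h _
  · filter_upwards [huz, ae_all_iff.2 fun n => N.nm_sub_le (u n) z w,
      ae_all_iff.2 fun n => N.nm_sub_le z (u n) w, ae_all_iff.2 fun n => N.nm_sub_comm z (u n)]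
      with ω h h₁ h₂ h₃
    have : Tendsto (fun n => N.nm (u n - w) ω) atTop (𝓝 (N.nm (z - w) ω)) := by
      refine tendsto_iff_norm_sub_tendsto_zero.2 (squeeze_zero (fun _ => norm_nonneg _)
        (fun n => ?_) h)
      rw [Real.norm_eq_abs, abs_sub_le_iff]
      constructor <;> linarith [h₁ n, h₂ n, h₃ n]
    exact tendsto_const_nhds.sub (tendsto_const_nhds.mul this)
  · filter_upwards [(hu n).2, hf] with ω h hf
    rw [← hf] at h
    rwa [EReal.coe_sub, EReal.le_sub_iff_add_le (.inl (EReal.coe_ne_bot _))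
      (.inl (EReal.coe_ne_top _))]

structure IsEkelandSeq (N : RNModule P E) (φ : E → L0e P) (α : L0 P) (G : Set E) (x : ℕ → E) :
    Prop where
  zero_mem : x 0 ∈ G
  succ_mem : ∀ n, x (n + 1) ∈ ekelandSet N φ α G (x n)
  lt_top : ∀ n, ∀ᵐ ω ∂P, φ (x n) ω < ⊤
  le_add : ∀ n, ∀ u ∈ ekelandSet N φ α G (x n),
    ∀ᵐ ω ∂P, φ (x (n + 1)) ω ≤ φ u ω + (((1 / 2 : ℝ) ^ n : ℝ) : EReal)

lemma exists_isEkelandSeq [IsFiniteMeasure P] (hG : N.HasGluing φ G) (hα : ∀ᵐ ω ∂P, 0 ≤ α ω)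
    {ξ : Ω → ℝ} (hξ : ∀ u ∈ G, ∀ᵐ ω ∂P, (ξ ω : EReal) ≤ φ u ω) {x₀ : E} (hx₀ : x₀ ∈ G)
    (hx₀top : ∀ᵐ ω ∂P, φ x₀ ω < ⊤) : ∃ x, x 0 = x₀ ∧ IsEkelandSeq N φ α G x := by
  obtain ⟨x, hx0, hx⟩ := exists_seq_of_step (p := fun w => w ∈ G ∧ ∀ᵐ ω ∂P, φ w ω < ⊤)
    (r := fun n w v => v ∈ ekelandSet N φ α G w ∧ ∀ u ∈ ekelandSet N φ α G w,
      ∀ᵐ ω ∂P, φ v ω ≤ φ u ω + (((1 / 2 : ℝ) ^ n : ℝ) : EReal)) ⟨hx₀, hx₀top⟩ fun n w hw => by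
    have htop : ∀ u ∈ ekelandSet N φ α G w, ∀ᵐ ω ∂P, φ u ω < ⊤ := fun u hu => by
      filter_upwards [ae_le_of_mem_ekelandSet hα hu, hw.2] with ω h₁ h₂ using h₁.trans_lt h₂
    obtain ⟨v, hv, hmin⟩ := (hG.ekelandSet w).exists_ae_le_add ⟨w, self_mem_ekelandSet hw.1⟩
      (fun u hu => hξ u hu.1) htop (pow_pos (by norm_num : (0 : ℝ) < 1 / 2) n)
    exact ⟨v, ⟨hv.1, htop v hv⟩, hv, hmin⟩
  exact ⟨x, hx0, hx0 ▸ hx₀, fun n => (hx n).2.1, fun n => (hx n).1.2, fun n => (hx n).2.2⟩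

namespace IsEkelandSeq

variable {x : ℕ → E}

lemma mem (hx : IsEkelandSeq N φ α G x) (n : ℕ) : x n ∈ G := by
  cases n with
  | zero => exact hx.zero_mem
  | succ n => exact (hx.succ_mem n).1

lemma mem_of_le (hx : IsEkelandSeq N φ α G x) (hα : ∀ᵐ ω ∂P, 0 ≤ α ω) {n m : ℕ} (h : n ≤ m) :
    x m ∈ ekelandSet N φ α G (x n) := by
  induction m, h using Nat.le_induction with
  | base => exact self_mem_ekelandSet (hx.mem n)
  | succ m _ ih => exact ekelandSet_trans hα (hx.succ_mem m) ih

lemma mul_nm_sub_le (hx : IsEkelandSeq N φ α G x) (hα : ∀ᵐ ω ∂P, 0 ≤ α ω)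
    (hbot : ∀ u ∈ G, ∀ᵐ ω ∂P, ⊥ < φ u ω) (n : ℕ) {u : E}
    (hu : u ∈ ekelandSet N φ α G (x (n + 1))) :
    ∀ᵐ ω ∂P, α ω * N.nm (u - x (n + 1)) ω ≤ (1 / 2 : ℝ) ^ n :=
  mul_nm_sub_le_of_mem_ekelandSet hbot (hx.succ_mem n) (hx.lt_top _) (hx.le_add n) hα hu

lemma exists_mem_ekelandSet (hx : IsEkelandSeq N φ α G x) (hcomp : N.cComplete)
    (hGcl : N.cClosed G) (hGCC : N.HasCC G) (hloc : N.LocalProp φ) (hlsc : N.cLscOn φ G)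
    (hα : α ∈ L0pp P) (hbot : ∀ u ∈ G, ∀ᵐ ω ∂P, ⊥ < φ u ω) :
    ∃ z ∈ G, ∀ n, z ∈ ekelandSet N φ α G (x n) := by
  have hα0 := ae_nonneg_of_mem_L0pp hα
  have hcauchy : ∀ n m, n ≤ m →
      ∀ᵐ ω ∂P, N.nm (x (m + 1) - x (n + 1)) ω ≤ (1 / 2 : ℝ) ^ n / α ω := fun n m h => by
    filter_upwards [hx.mul_nm_sub_le hα0 hbot n (hx.mem_of_le hα0 (Nat.succ_le_succ h)), hα]
      with ω h hα
    rwa [le_div_iff₀ hα, mul_comm]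
  obtain ⟨z, hzG, hz⟩ := hGCC.exists_ae_tendsto_of_cauchy hcomp hGcl (fun n => hx.mem (n + 1))
    (fun n => by fun_prop) (.of_forall fun ω => tendsto_half_pow_div (α ω)) hcauchy
  refine ⟨z, hzG, fun n => mem_ekelandSet_of_tendsto hlsc hGCC hloc hzG (hbot _ (hx.mem n))
    (hx.lt_top n) (u := fun m => x (m + n + 1)) (fun m => hx.mem_of_le hα0 (by omega)) ?_⟩
  filter_upwards [hz] with ω h
  exact (tendsto_add_atTop_iff_nat n).2 h

lemma eq_of_mem_ekelandSet (hx : IsEkelandSeq N φ α G x) (hα : α ∈ L0pp P)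
    (hbot : ∀ u ∈ G, ∀ᵐ ω ∂P, ⊥ < φ u ω) {y z : E} (hz : ∀ n, z ∈ ekelandSet N φ α G (x n))
    (hy : y ∈ ekelandSet N φ α G z) : y = z := by
  have hα0 := ae_nonneg_of_mem_L0pp hα
  refine N.eq_of_forall_ae_nm_sub_le (b := fun n ω => 2 * ((1 / 2 : ℝ) ^ n / α ω))
    (.of_forall fun ω => by simpa using (tendsto_half_pow_div (α ω)).const_mul 2) fun n => ?_
  filter_upwards [hx.mul_nm_sub_le hα0 hbot n (ekelandSet_trans hα0 hy (hz (n + 1))),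
    hx.mul_nm_sub_le hα0 hbot n (hz (n + 1)), N.nm_sub_le y (x (n + 1)) z,
    N.nm_sub_comm z (x (n + 1)), hα] with ω h₁ h₂ htri hcomm hα
  rw [← le_div_iff₀' hα] at h₁ h₂
  linarith

end IsEkelandSeq

end Ekeland

theorem ekeland_precise_Tc_general
    {Ω : Type*} [MeasurableSpace Ω] {P : Measure Ω} [IsProbabilityMeasure P]
    {E : Type*} [AddCommGroup E] (N : RNModule P E) (hcomp : N.cComplete)
    (ε : L0 P)
    (φ : E → L0e P) (hloc : N.LocalProp φ)
    (G : Set E) (hGcl : N.cClosed G) (hGCC : N.HasCC G)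
    (hproper : ProperOn φ G) (hlsc : N.cLscOn φ G) (hbdd : BddBelowOn φ G)
    (x₀ : E) (hx₀G : x₀ ∈ G)
    (hx₀ : ∃ η : L0e P, IsInfOn φ G η ∧ ∀ᵐ ω ∂P, φ x₀ ω ≤ η ω + (ε ω : EReal))
    (α : L0 P) (hα : α ∈ L0pp P) :
    ∃ z ∈ G,
      (∀ᵐ ω ∂P, φ z ω + ((α ω * N.nm (z - x₀) ω : ℝ) : EReal) ≤ φ x₀ ω) ∧
      (∀ᵐ ω ∂P, N.nm (z - x₀) ω ≤ (α ω)⁻¹ * ε ω) ∧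
      ∀ x ∈ G, x ≠ z → ∃ A : Set Ω, MeasurableSet A ∧ 0 < P A ∧
        ∀ᵐ ω ∂P, ω ∈ A → φ z ω < φ x ω + ((α ω * N.nm (x - z) ω : ℝ) : EReal) := by
  obtain ⟨ξ, hξ⟩ := hbdd
  obtain ⟨η, hη, hx₀η⟩ := hx₀
  obtain ⟨hbot, x', hx'G, hx'top⟩ := hproper
  have hα0 := ae_nonneg_of_mem_L0pp hα
  have hx₀top : ∀ᵐ ω ∂P, φ x₀ ω < ⊤ := by
    filter_upwards [hx₀η, hη.1 x' hx'G, hx'top] with ω h₁ h₂ h₃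
    exact h₁.trans_lt (EReal.add_lt_top (h₂.trans_lt h₃).ne (EReal.coe_ne_top _))
  obtain ⟨x, rfl, hx⟩ := exists_isEkelandSeq (hGCC.hasGluing hloc) hα0 hξ hx₀G hx₀top
  obtain ⟨z, hzG, hz⟩ := hx.exists_mem_ekelandSet hcomp hGcl hGCC hloc hlsc hα hbot
  refine ⟨z, hzG, (hz 0).2, ?_, fun y hyG hyz => ?_⟩
  · filter_upwards [(hz 0).2, hη.1 z hzG, hx₀η, hbot _ hx₀G, hx₀top, hα]
      with ω h₁ h₂ h₃ hbot htop hα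
    have h := le_of_add_le_of_le_add_ereal ((add_le_add_left h₂ _).trans h₁) h₃ hbot.ne' htop.ne
    rwa [← le_div_iff₀' hα, div_eq_inv_mul] at h
  · exact exists_pos_measure_of_not_ae (measurableSet_lt (by fun_prop) (by fun_prop)) fun h =>
      hyz (hx.eq_of_mem_ekelandSet hα hbot hz ⟨hyG, h.mono fun _ => not_lt.1⟩)

/-- Theorem 3.10: the precise form of Ekeland's variational principle on a
`𝒯_c`-complete RN module with the countable concatenation property, for a function with
the local property whose restriction to a `𝒯_c`-closed `G` with the countable
concatenation property is proper, `𝒯_c`-lower semicontinuous and bounded from below. -/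
theorem ekeland_precise_Tc
    {Ω : Type*} [MeasurableSpace Ω] {P : Measure Ω} [IsProbabilityMeasure P]
    {E : Type*} [AddCommGroup E] (N : RNModule P E) (hcomp : N.cComplete)
    (hCCE : N.HasCC Set.univ)
    (ε : L0 P) (hε : ε ∈ L0pp P)
    (φ : E → L0e P) (hloc : N.LocalProp φ)
    (G : Set E) (hGcl : N.cClosed G) (hGCC : N.HasCC G)
    (hproper : ProperOn φ G) (hlsc : N.cLscOn φ G) (hbdd : BddBelowOn φ G)
    (x₀ : E) (hx₀G : x₀ ∈ G)
    (hx₀ : ∃ η : L0e P, IsInfOn φ G η ∧ ∀ᵐ ω ∂P, φ x₀ ω ≤ η ω + (ε ω : EReal))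
    (α : L0 P) (hα : α ∈ L0pp P) :
    ∃ z ∈ G,
      (∀ᵐ ω ∂P, φ z ω + ((α ω * N.nm (z - x₀) ω : ℝ) : EReal) ≤ φ x₀ ω) ∧
      (∀ᵐ ω ∂P, N.nm (z - x₀) ω ≤ (α ω)⁻¹ * ε ω) ∧
      ∀ x ∈ G, x ≠ z → ∃ A : Set Ω, MeasurableSet A ∧ 0 < P A ∧
        ∀ᵐ ω ∂P, ω ∈ A → φ z ω < φ x ω + ((α ω * N.nm (x - z) ω : ℝ) : EReal) :=
  ekeland_precise_Tc_general N hcomp ε φ hloc G hGcl hGCC hproper hlsc hbdd x₀ hx₀G hx₀ α hα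

end GYY
end

section
/- Let E be an RN module over ℝ with base (Ω,𝓕,P) such that E has the countable concatenation property, and f : E → L̄⁰(𝓕) a function with the local property. Then the epigraph epi(f) := {(x,r) ∈ E × L⁰(𝓕) : f(x) ≤ r} has the countable concatenation property as a subset of the L⁰(𝓕)-module E × L⁰(𝓕) (with componentwise module operations). -/
open MeasureTheory ENNReal Set Filter

/-!
Concatenate the `E`-components with the countable concatenation property of `E` and the
`L⁰`-components by gluing representatives along the partition. On each `Aₙ` the glued point
agrees with the `n`-th one after multiplication by `Ĩ_{Aₙ}`, so the local property of `f`
transfers `f(xₙ) ≤ rₙ` to the glued pair there.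
-/

open Function

namespace MeasureTheory

variable {Ω : Type*} [MeasurableSpace Ω] {μ : Measure Ω}

theorem ae_of_forall_ae_mem_imp {ι : Type*} [Countable ι] {A : ι → Set Ω}
    (hcover : ⋃ i, A i = univ) {p : Ω → Prop} (h : ∀ i, ∀ᵐ ω ∂μ, ω ∈ A i → p ω) :
    ∀ᵐ ω ∂μ, p ω := by
  filter_upwards [ae_all_iff.2 h] with ω hω
  obtain ⟨i, hi⟩ := mem_iUnion.1 (hcover.symm ▸ mem_univ ω : ω ∈ ⋃ i, A i)
  exact hω i hi

theorem AEEqFun.exists_eq_on_partition {β : Type*} [TopologicalSpace β]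
    [TopologicalSpace.PseudoMetrizableSpace β] (g : ℕ → Ω →ₘ[μ] β) {A : ℕ → Set Ω}
    (hA : ∀ n, MeasurableSet (A n)) (hdisj : Pairwise (Disjoint on A))
    (hcover : ⋃ n, A n = univ) :
    ∃ h : Ω →ₘ[μ] β, ∀ n, ∀ᵐ ω ∂μ, ω ∈ A n → h ω = g n ω := by
  classical
  have hmem : ∀ ω, ∃ n, ω ∈ A n := fun ω => mem_iUnion.1 (hcover.symm ▸ mem_univ ω)
  let idx : Ω → ℕ := fun ω => Nat.find (hmem ω)
  have hidx : ∀ {n ω}, ω ∈ A n → idx ω = n := fun {n ω} hω => by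
    by_contra hne
    exact (hdisj hne).le_bot ⟨Nat.find_spec (hmem ω), hω⟩
  have hglued : StronglyMeasurable fun ω => g (idx ω) ω := by
    have hjoint := stronglyMeasurable_uncurry_of_continuous_of_stronglyMeasurable
      (u := fun n ω => g n ω) (fun _ => continuous_of_discreteTopology)
      (fun n => (g n).stronglyMeasurable)
    exact hjoint.comp_measurable ((measurable_find hmem hA).prodMk measurable_id)
  refine ⟨AEEqFun.mk _ hglued.aestronglyMeasurable, fun n => ?_⟩
  filter_upwards [AEEqFun.coeFn_mk _ hglued.aestronglyMeasurable] with ω hω hωA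
  rw [hω, hidx hωA]

end MeasureTheory

namespace GYY

variable {Ω : Type*} [MeasurableSpace Ω] {P : Measure Ω}

theorem indL0_mul_eq_of_ae_eq_on {A : Set Ω} (hA : MeasurableSet A) {ξ η : L0 P}
    (h : ∀ᵐ ω ∂P, ω ∈ A → ξ ω = η ω) : indL0 P A hA * ξ = indL0 P A hA * η := by
  apply AEEqFun.ext
  filter_upwards [AEEqFun.coeFn_mul (indL0 P A hA) ξ, AEEqFun.coeFn_mul (indL0 P A hA) η,
    AEEqFun.coeFn_mk (A.indicator fun _ => (1 : ℝ)) (aestronglyMeasurable_const.indicator hA), h]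
    with ω hξ hη hind hω
  rw [hξ, hη, Pi.mul_apply, Pi.mul_apply, indL0, hind]
  by_cases hωA : ω ∈ A
  · rw [hω hωA]
  · simp only [indicator_of_notMem hωA, zero_mul]

theorem RNModule.LocalProp.ae_eq_on_of_smul_indL0_eq {E : Type*} [AddCommGroup E]
    {N : RNModule P E} {f : E → L0e P} (hloc : N.LocalProp f) {x y : E} {A : Set Ω}
    (hA : MeasurableSet A) (h : N.smul (indL0 P A hA) x = N.smul (indL0 P A hA) y) :
    ∀ᵐ ω ∂P, ω ∈ A → f x ω = f y ω := by
  filter_upwards [hloc x A hA, hloc y A hA] with ω hx hy hω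
  rw [hx hω, hy hω, h]

theorem epigraph_hasCC_general
    {Ω : Type*} [MeasurableSpace Ω] {P : Measure Ω}
    {E : Type*} [AddCommGroup E] (N : RNModule P E)
    (hCCE : N.HasCC Set.univ)
    (f : E → L0e P) (hloc : N.LocalProp f) :
    N.HasCCProd {p : E × L0 P | ∀ᵐ ω ∂P, f p.1 ω ≤ (p.2 ω : EReal)} := by
  intro p hp A hA hdisj hcover
  obtain ⟨y, -, hy⟩ := hCCE (fun n => (p n).1) (fun _ => mem_univ _) A hA hdisj hcover
  obtain ⟨s, hs⟩ :=
    AEEqFun.exists_eq_on_partition (fun n => (p n).2) hA (fun i j => hdisj i j) hcover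
  refine ⟨(y, s), ae_of_forall_ae_mem_imp hcover fun n => ?_,
    fun n => ⟨hy n, indL0_mul_eq_of_ae_eq_on (hA n) (hs n)⟩⟩
  filter_upwards [hloc.ae_eq_on_of_smul_indL0_eq (hA n) (hy n), hp n, hs n]
    with ω hfy hfp hsp hω
  calc f y ω = f (p n).1 ω := hfy hω
    _ ≤ (p n).2 ω := hfp
    _ = s ω := by rw [hsp hω]

/-- Lemma 4.10. If `E` has the countable concatenation property and
`f : E → L̄⁰(𝓕)` has the local property, then `epi(f) = {(x,r) ∈ E × L⁰ : f(x) ≤ r}` has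
the countable concatenation property as a subset of the product `L⁰(𝓕)`-module
`E × L⁰(𝓕)`. -/
theorem epigraph_hasCC
    {Ω : Type*} [MeasurableSpace Ω] {P : Measure Ω} [IsProbabilityMeasure P]
    {E : Type*} [AddCommGroup E] (N : RNModule P E)
    (hCCE : N.HasCC Set.univ)
    (f : E → L0e P) (hloc : N.LocalProp f) :
    N.HasCCProd {p : E × L0 P | ∀ᵐ ω ∂P, f p.1 ω ≤ (p.2 ω : EReal)} :=
  epigraph_hasCC_general N hCCE f hloc

end GYY
end
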